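/- arXiv:2309.12116 — 2 statements merged into one kernel-verified Lean document; each statement's English description precedes it below -/
import Mathlib

section
/- Let p : ℬ → X be a Banach bundle, for each x ∈ X let C_x be a closed vector subspace of B_x, and let 𝒞 = ∐_{x∈X} C_x = {b ∈ ℬ : b ∈ C_{p(b)}} with the relative topology. If for every x ∈ X the set {f(x) : f ∈ Γ(X;𝒞)} is dense in C_x — where Γ(X;𝒞) denotes the continuous maps f : X → 𝒞 with p(f(x)) = x for all x — then 𝒞 is a Banach subbundle of ℬ (equivalently, the restriction of p to 𝒞 is an open map). -/
noncomputable section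

open Filter Topology

namespace FellRieffel

/-! ### Banach bundles (upper-semicontinuous Banach bundles), total-space picture.

A Banach bundle over `X` is given by a total space `B`, a projection, a fibrewise
addition and scalar multiplication, a norm, and a zero section.  The fibrewise
operations are recorded as total functions on the total space; all axioms are imposed
only on members of a common fibre, so the values elsewhere are irrelevant junk. -/

/-- The data of a Banach bundle: projection, fibrewise addition, fibrewise scalar
multiplication, norm, and zero section. -/
structure BanachBundleData (X B : Type*) where
  proj : B → X
  add : B → B → B
  smul : ℂ → B → B
  norm : B → ℝ
  zero : X → B

namespace BanachBundleData

variable {X B : Type*} (D : BanachBundleData X B)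

/-- `b - b'` computed fibrewise. -/
def sub (a b : B) : B := D.add a (D.smul (-1) b)

/-- The sum of a list of elements of the fibre over `x`. -/
def fibSum (x : X) : List B → B
  | [] => D.zero x
  | b :: l => D.add b (fibSum x l)

/-- The fibre of the bundle over `x`. -/
def Fib (x : X) : Type _ := {b : B // D.proj b = x}

/-- A subset `S` of the fibre over `x` is (sequentially) closed in the fibre norm. -/
def FibClosed (x : X) (S : Set B) : Prop :=
  ∀ (u : ℕ → B) (b : B), (∀ n, u n ∈ S) → D.proj b = x →
    Tendsto (fun n => D.norm (D.sub (u n) b)) atTop (𝓝 0) → b ∈ S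

end BanachBundleData

/-- A subset `S` of the total space is a closed linear subspace of the fibre over `x`. -/
structure FibClosedSubspace {X B : Type*} (D : BanachBundleData X B) (x : X) (S : Set B) :
    Prop where
  proj_mem : ∀ b ∈ S, D.proj b = x
  zero_mem : D.zero x ∈ S
  add_mem : ∀ a ∈ S, ∀ b ∈ S, D.add a b ∈ S
  smul_mem : ∀ (c : ℂ), ∀ b ∈ S, D.smul c b ∈ S
  closed : D.FibClosed x S

/-- The axioms making `D : BanachBundleData X B` an (upper-semicontinuous) Banach
bundle over `X`. -/
structure IsBanachBundle {X B : Type*} [TopologicalSpace X] [TopologicalSpace B]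
    (D : BanachBundleData X B) : Prop where
  continuous_proj : Continuous D.proj
  isOpenMap_proj : IsOpenMap D.proj
  surjective_proj : Function.Surjective D.proj
  proj_zero : ∀ x, D.proj (D.zero x) = x
  proj_add : ∀ a b, D.proj a = D.proj b → D.proj (D.add a b) = D.proj a
  proj_smul : ∀ c b, D.proj (D.smul c b) = D.proj b
  -- each fibre is a complex vector space
  add_comm : ∀ a b, D.proj a = D.proj b → D.add a b = D.add b a
  add_assoc : ∀ a b c, D.proj a = D.proj b → D.proj b = D.proj c →
    D.add (D.add a b) c = D.add a (D.add b c)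
  zero_add : ∀ b, D.add (D.zero (D.proj b)) b = b
  neg_add_cancel : ∀ b, D.add (D.smul (-1) b) b = D.zero (D.proj b)
  one_smul : ∀ b, D.smul 1 b = b
  mul_smul : ∀ (c d : ℂ) b, D.smul (c * d) b = D.smul c (D.smul d b)
  smul_add : ∀ (c : ℂ) a b, D.proj a = D.proj b →
    D.smul c (D.add a b) = D.add (D.smul c a) (D.smul c b)
  add_smul : ∀ (c d : ℂ) b, D.smul (c + d) b = D.add (D.smul c b) (D.smul d b)
  -- each fibre is normed
  norm_nonneg : ∀ b, 0 ≤ D.norm b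
  norm_zero : ∀ x, D.norm (D.zero x) = 0
  eq_zero_of_norm_eq_zero : ∀ b, D.norm b = 0 → b = D.zero (D.proj b)
  norm_add_le : ∀ a b, D.proj a = D.proj b → D.norm (D.add a b) ≤ D.norm a + D.norm b
  norm_smul : ∀ (c : ℂ) b, D.norm (D.smul c b) = ‖c‖ * D.norm b
  -- each fibre is complete
  complete : ∀ (x : X) (u : ℕ → B), (∀ n, D.proj (u n) = x) →
    (∀ ε > 0, ∃ N, ∀ m ≥ N, ∀ n ≥ N, D.norm (D.sub (u m) (u n)) < ε) →
    ∃ b, D.proj b = x ∧ Tendsto (fun n => D.norm (D.sub (u n) b)) atTop (𝓝 0)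
  -- (B1): upper semicontinuity of the norm
  usc_norm : ∀ r : ℝ, IsOpen {b : B | D.norm b < r}
  -- (B2): continuity of fibrewise addition
  continuous_add :
    Continuous (fun p : {p : B × B // D.proj p.1 = D.proj p.2} => D.add p.1.1 p.1.2)
  -- (B3): continuity of scalar multiplication
  continuous_smul : Continuous (fun p : ℂ × B => D.smul p.1 p.2)
  -- (B4): if `p (bᵢ) → x` and `‖bᵢ‖ → 0` then `bᵢ → 0ₓ`
  tendsto_zero : ∀ {ι : Type*} (l : Filter ι) (b : ι → B) (x : X),
    Tendsto (fun i => D.proj (b i)) l (𝓝 x) →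
    Tendsto (fun i => D.norm (b i)) l (𝓝 (0 : ℝ)) →
    Tendsto b l (𝓝 (D.zero x))

/-- A continuous section of the bundle. -/
def IsSection {X B : Type*} [TopologicalSpace X] [TopologicalSpace B]
    (D : BanachBundleData X B) (f : X → B) : Prop :=
  Continuous f ∧ ∀ x, D.proj (f x) = x

/-- The section `f` is compactly supported. -/
def HasCompactSupportSection {X B : Type*} [TopologicalSpace X]
    (D : BanachBundleData X B) (f : X → B) : Prop :=
  ∃ K : Set X, IsCompact K ∧ ∀ x ∉ K, f x = D.zero x

/-- `C` is a Banach subbundle of the bundle `D`: its fibres are closed linear subspaces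
of the fibres of `D`, and the restriction of the projection to `C` (with the relative
topology) is an open map; by Remark 2.8 of the paper this makes `C`, with the relative
topology and the inherited structure, a Banach bundle. -/
structure IsSubbundle {X B : Type*} [TopologicalSpace X] [TopologicalSpace B]
    (D : BanachBundleData X B) (C : Set B) : Prop where
  fib_closedSubspace : ∀ x : X, FibClosedSubspace D x (C ∩ {b | D.proj b = x})
  isOpenMap_restrict : IsOpenMap (fun c : C => D.proj c.1)

/-- The norm-closure of the (ℂ-linear span of the) set `{b ∈ fibre x | P b}` inside the
fibre over `x`, described concretely: the elements of the fibre over `x` which can be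
approximated in norm by finite sums of elements satisfying `P`.  (This agrees with the
closed linear span whenever the class `P` is stable under scalar multiples, as is the
case for all the classes of products to which we apply it.) -/
def fibSpanApprox {X B : Type*} (D : BanachBundleData X B) (x : X) (P : B → Prop) :
    Set B :=
  {c : B | D.proj c = x ∧ ∀ ε > 0, ∃ l : List B, (∀ b ∈ l, P b) ∧
    D.norm (D.sub c (D.fibSum x l)) < ε}

end FellRieffel

namespace FellRieffel

/-- Fibrewise algebra: `(-(a - b)) + a = b` for `a, b` in a common fibre. -/
lemma add_neg_sub {X B : Type*} [TopologicalSpace X] [TopologicalSpace B]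
    {D : BanachBundleData X B} (hD : IsBanachBundle D)
    {a b : B} (h : D.proj a = D.proj b) :
    D.add (D.smul (-1) (D.sub a b)) a = b := by
  have hpb : D.proj (D.smul (-1 : ℂ) b) = D.proj b := hD.proj_smul _ _
  have h1 : D.smul (-1) (D.sub a b) = D.add (D.smul (-1) a) b := by
    rw [BanachBundleData.sub, hD.smul_add _ _ _ (by rw [hpb]; exact h),
      ← hD.mul_smul, show ((-1 : ℂ) * (-1)) = 1 by ring, hD.one_smul]
  rw [h1, hD.add_assoc _ _ _ (by rw [hD.proj_smul]; exact h) h.symm,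
    hD.add_comm b a h.symm, ← hD.add_assoc (D.smul (-1) a) a b (hD.proj_smul _ _) h,
    hD.neg_add_cancel, h, hD.zero_add]

/-- **Proposition 2.9**: let `p : ℬ → X` be a Banach bundle, and for each `x` let
`C_x ⊆ B_x` be a closed linear subspace; put `𝒞 = ∐ C_x` (a subset of the total space,
with the relative topology).  If for every `x` the set `{f x : f ∈ Γ(X;𝒞)}` of values of
continuous sections of `p` lying in `𝒞` is dense in `C_x`, then `𝒞` is a Banach
subbundle of `ℬ`; equivalently (given that its fibres are closed subspaces), the
restriction of `p` to `𝒞` is an open map. -/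
theorem subbundle_of_dense_sections
    (X B : Type*) [TopologicalSpace X] [TopologicalSpace B]
    (D : BanachBundleData X B) (hD : IsBanachBundle D)
    (C : Set B)
    (hC_fib : ∀ x : X, FibClosedSubspace D x (C ∩ {b | D.proj b = x}))
    (h_dense : ∀ x : X, ∀ b ∈ C, D.proj b = x → ∀ ε > 0,
      ∃ f : X → B, IsSection D f ∧ (∀ y, f y ∈ C) ∧ D.norm (D.sub b (f x)) < ε) :
    IsSubbundle D C := by
  refine ⟨hC_fib, ?_⟩
  intro U hU
  obtain ⟨V, hV, rfl⟩ := isOpen_induced_iff.mp hU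
  rw [isOpen_iff_mem_nhds]
  rintro _ ⟨c₀, hc₀V, rfl⟩
  set c : B := c₀.1 with hc_def
  set x : X := D.proj c with hx_def
  have hpc : D.proj c = x := hx_def.symm
  by_contra hT
  set T : Set X := (fun c : C => D.proj c.1) '' (Subtype.val ⁻¹' V) with hT_def
  have hcl : x ∈ closure Tᶜ := by
    rw [closure_compl]
    exact fun h => hT (mem_interior_iff_mem_nhds.mp h)
  have hne : (𝓝[Tᶜ] x).NeBot := mem_closure_iff_nhdsWithin_neBot.mp hcl
  have key : ∀ n : ℕ, ∃ f : X → B, IsSection D f ∧ (∀ y, f y ∈ C) ∧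
      D.norm (D.sub c (f x)) < 1 / (n + 1) :=
    fun n => h_dense x c c₀.2 rfl _ (by positivity)
  choose f hf hfC hfn using key
  have hproj : ∀ n, D.proj (f n x) = x := fun n => (hf n).2 x
  -- Step A: each `f n x` lies in the (closed) complement of `V`.
  have hA : ∀ n, f n x ∈ Vᶜ := by
    intro n
    refine hV.isClosed_compl.mem_of_tendsto
      (((hf n).1.tendsto x).mono_left (nhdsWithin_le_nhds (s := Tᶜ))) ?_
    filter_upwards [self_mem_nhdsWithin] with y hy
    exact fun hmem => hy ⟨⟨f n y, hfC n y⟩, hmem, (hf n).2 y⟩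
  -- Step B: `f n x → c` in the topology of `B`.
  set e : ℕ → B := fun n => D.smul (-1) (D.sub c (f n x)) with he_def
  have hsubproj : ∀ n, D.proj (D.sub c (f n x)) = x := by
    intro n
    rw [BanachBundleData.sub, hD.proj_add _ _ (by simp [hD.proj_smul, hproj, hpc])]
  have heproj : ∀ n, D.proj (e n) = x := fun n => by
    rw [he_def, hD.proj_smul, hsubproj]
  have henorm : Tendsto (fun n => D.norm (e n)) atTop (𝓝 0) := by
    refine squeeze_zero (fun n => hD.norm_nonneg _) (fun n => ?_)
      tendsto_one_div_add_atTop_nhds_zero_nat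
    calc D.norm (e n) = D.norm (D.sub c (f n x)) := by
          rw [he_def, hD.norm_smul]; simp
      _ ≤ 1 / (n + 1) := (hfn n).le
  have hp' : Tendsto (fun n => D.proj (e n)) atTop (𝓝 x) := by
    simp only [heproj]; exact tendsto_const_nhds
  have he0 : Tendsto e atTop (𝓝 (D.zero x)) := by
    have h3 := hD.tendsto_zero (Filter.map ULift.up atTop) (fun i : ULift ℕ => e i.down) x
      (Filter.tendsto_map'_iff.mpr hp') (Filter.tendsto_map'_iff.mpr henorm)
    exact Filter.tendsto_map'_iff.mp h3
  have hfx : ∀ n, f n x = D.add (e n) c :=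
    fun n => (add_neg_sub hD (hpc.trans (hproj n).symm)).symm
  have hadd : Tendsto (fun n => f n x) atTop (𝓝 c) := by
    have hpair : Tendsto (fun n => ((⟨(e n, c), by rw [heproj n, hpc]⟩ :
        {p : B × B // D.proj p.1 = D.proj p.2}))) atTop
        (𝓝 ⟨(D.zero x, c), by rw [hD.proj_zero, hpc]⟩) := by
      rw [tendsto_subtype_rng]
      exact he0.prodMk_nhds tendsto_const_nhds
    have h2 := (hD.continuous_add.tendsto _).comp hpair
    simp only [Function.comp] at h2
    have hz : D.add (D.zero x) c = c := by
      rw [hx_def]; exact hD.zero_add c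
    rw [hz] at h2
    exact h2.congr (fun n => (hfx n).symm)
  have hcV : c ∈ Vᶜ :=
    hV.isClosed_compl.mem_of_tendsto hadd (Filter.Eventually.of_forall hA)
  exact hcV hc₀V

end FellRieffel
end
end

section
/- Let q : ℰ → T be a ℬ–𝒞 equivalence between Fell bundles p_ℬ : ℬ → H and p_𝒞 : 𝒞 → K over an (H,K)-equivalence T. For h ∈ H and t ∈ T with s(h) = ρ(t), the map (b,e) ↦ b·e induces an isomorphism of B_{r(h)}–C_{σ(t)} imprimitivity bimodules from the internal tensor product B_h ⊗_{B_{ρ(t)}} E_t onto E_{h·t}. Similarly, for t ∈ T and k ∈ K with σ(t) = r(k), the map (e,c) ↦ e·c induces an isomorphism of B_{ρ(t)}–C_{s(k)} imprimitivity bimodules from E_t ⊗_{C_{σ(t)}} C_k onto E_{t·k}. -/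
noncomputable section

open Filter Topology

namespace FellRieffel

/-! ### Topological groupoids -/

/-- An (algebraic) groupoid structure on a type `G`, with units identified with elements
of `G`: range and source maps, a partially defined multiplication (recorded as a total
function; its values on non-composable pairs are irrelevant junk, as all axioms are
conditional on composability), and inversion. -/
structure GroupoidStr (G : Type*) where
  src : G → G
  rng : G → G
  mul : G → G → G
  inv : G → G
  src_src : ∀ g, src (src g) = src g
  rng_src : ∀ g, rng (src g) = src g
  src_rng : ∀ g, src (rng g) = rng g
  rng_rng : ∀ g, rng (rng g) = rng g
  rng_mul : ∀ g h, src g = rng h → rng (mul g h) = rng g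
  src_mul : ∀ g h, src g = rng h → src (mul g h) = src h
  mul_assoc : ∀ g h k, src g = rng h → src h = rng k →
    mul (mul g h) k = mul g (mul h k)
  id_mul : ∀ g, mul (rng g) g = g
  mul_id : ∀ g, mul g (src g) = g
  src_inv : ∀ g, src (inv g) = rng g
  rng_inv : ∀ g, rng (inv g) = src g
  inv_inv : ∀ g, inv (inv g) = g
  inv_mul : ∀ g, mul (inv g) g = src g
  mul_inv : ∀ g, mul g (inv g) = rng g

/-- `u` is a unit of the groupoid. -/
def GroupoidStr.IsUnit {G : Type*} (𝒢 : GroupoidStr G) (u : G) : Prop := 𝒢.src u = u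

/-- The groupoid operations are compatible with a topology on `G`. -/
structure IsTopGroupoid {G : Type*} [TopologicalSpace G] (𝒢 : GroupoidStr G) : Prop where
  continuous_mul :
    Continuous (fun p : {p : G × G // 𝒢.src p.1 = 𝒢.rng p.2} => 𝒢.mul p.1.1 p.1.2)
  continuous_inv : Continuous 𝒢.inv

/-! ### Fell bundles over groupoids -/

/-- The data of a Fell bundle over a groupoid: Banach-bundle data together with a
(partially defined, recorded as total) multiplication and an involution on the total
space. -/
structure FellBundleData (G B : Type*) extends BanachBundleData G B where
  mul : B → B → B
  star : B → B

/-- The axioms making `D : FellBundleData G 𝒢 B` a (saturated) Fell bundle over the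
topological groupoid `(G, 𝒢)`. -/
structure IsFellBundle {G B : Type*} [TopologicalSpace G] [TopologicalSpace B]
    (𝒢 : GroupoidStr G) (D : FellBundleData G B)
    extends IsBanachBundle D.toBanachBundleData : Prop where
  -- (FB1), (FB2)
  proj_mul : ∀ a b, 𝒢.src (D.proj a) = 𝒢.rng (D.proj b) →
    D.proj (D.mul a b) = 𝒢.mul (D.proj a) (D.proj b)
  proj_star : ∀ a, D.proj (D.star a) = 𝒢.inv (D.proj a)
  -- continuity of the operations
  continuous_mul : Continuous
    (fun p : {p : B × B // 𝒢.src (D.proj p.1) = 𝒢.rng (D.proj p.2)} => D.mul p.1.1 p.1.2)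
  continuous_star : Continuous D.star
  -- bilinearity and associativity of the multiplication
  mul_add : ∀ a b c, 𝒢.src (D.proj a) = 𝒢.rng (D.proj b) → D.proj b = D.proj c →
    D.mul a (D.add b c) = D.add (D.mul a b) (D.mul a c)
  add_mul : ∀ a b c, D.proj a = D.proj b → 𝒢.src (D.proj a) = 𝒢.rng (D.proj c) →
    D.mul (D.add a b) c = D.add (D.mul a c) (D.mul b c)
  smul_mul : ∀ (z : ℂ) a b, 𝒢.src (D.proj a) = 𝒢.rng (D.proj b) →
    D.mul (D.smul z a) b = D.smul z (D.mul a b)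
  mul_smul' : ∀ (z : ℂ) a b, 𝒢.src (D.proj a) = 𝒢.rng (D.proj b) →
    D.mul a (D.smul z b) = D.smul z (D.mul a b)
  mul_assoc' : ∀ a b c, 𝒢.src (D.proj a) = 𝒢.rng (D.proj b) →
    𝒢.src (D.proj b) = 𝒢.rng (D.proj c) →
    D.mul (D.mul a b) c = D.mul a (D.mul b c)
  -- (FB3) and the involutive *-structure
  star_star : ∀ a, D.star (D.star a) = a
  star_add : ∀ a b, D.proj a = D.proj b → D.star (D.add a b) = D.add (D.star a) (D.star b)
  star_smul : ∀ (z : ℂ) a, D.star (D.smul z a) = D.smul (starRingEnd ℂ z) (D.star a)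
  star_mul' : ∀ a b, 𝒢.src (D.proj a) = 𝒢.rng (D.proj b) →
    D.star (D.mul a b) = D.mul (D.star b) (D.star a)
  -- norm conditions: submultiplicativity and the C*-identity (FB4)/(FB5)
  norm_mul_le : ∀ a b, 𝒢.src (D.proj a) = 𝒢.rng (D.proj b) →
    D.norm (D.mul a b) ≤ D.norm a * D.norm b
  norm_star_mul_self : ∀ a, D.norm (D.mul (D.star a) a) = D.norm a ^ 2
  -- positivity of `a* a` in the C*-algebra over the unit `s (p a)` (FB5)
  star_mul_self_pos : ∀ a, ∃ c, D.proj c = 𝒢.src (D.proj a) ∧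
    D.mul (D.star a) a = D.mul (D.star c) c
  -- saturation/fullness (FB5): `span B_g* B_g` is dense in `B_{s(g)}` and
  -- `span B_g B_g*` is dense in `B_{r(g)}`
  full_src : ∀ g : G, ∀ c, D.proj c = 𝒢.src g →
    c ∈ fibSpanApprox D.toBanachBundleData (𝒢.src g)
      (fun z => ∃ a b, D.proj a = g ∧ D.proj b = g ∧ z = D.mul (D.star a) b)
  full_rng : ∀ g : G, ∀ c, D.proj c = 𝒢.rng g →
    c ∈ fibSpanApprox D.toBanachBundleData (𝒢.rng g)
      (fun z => ∃ a b, D.proj a = g ∧ D.proj b = g ∧ z = D.mul a (D.star b))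

variable {G B : Type*}

/-- A Fell subbundle: a Banach subbundle closed under multiplication and involution
which is a Fell bundle under the inherited operations (the only non-automatic part of
the latter being the fullness (FB5) of the fibres of the subbundle over its own unit
fibres). -/
structure IsFellSubbundle [TopologicalSpace G] [TopologicalSpace B]
    (𝒢 : GroupoidStr G) (D : FellBundleData G B) (J : Set B) : Prop where
  subbundle : IsSubbundle D.toBanachBundleData J
  mul_mem : ∀ a ∈ J, ∀ b ∈ J, 𝒢.src (D.proj a) = 𝒢.rng (D.proj b) → D.mul a b ∈ J
  star_mem : ∀ a ∈ J, D.star a ∈ J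
  full_src : ∀ g : G, ∀ c ∈ J, D.proj c = 𝒢.src g →
    c ∈ fibSpanApprox D.toBanachBundleData (𝒢.src g)
      (fun z => ∃ a ∈ J, ∃ b ∈ J, D.proj a = g ∧ D.proj b = g ∧ z = D.mul (D.star a) b)
  full_rng : ∀ g : G, ∀ c ∈ J, D.proj c = 𝒢.rng g →
    c ∈ fibSpanApprox D.toBanachBundleData (𝒢.rng g)
      (fun z => ∃ a ∈ J, ∃ b ∈ J, D.proj a = g ∧ D.proj b = g ∧ z = D.mul a (D.star b))

/-- An ideal of a Fell bundle: a Fell subbundle absorbing under multiplication. -/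
structure IsFellIdeal [TopologicalSpace G] [TopologicalSpace B]
    (𝒢 : GroupoidStr G) (D : FellBundleData G B) (J : Set B) : Prop where
  fellSubbundle : IsFellSubbundle 𝒢 D J
  mul_mem_left : ∀ a b, 𝒢.src (D.proj a) = 𝒢.rng (D.proj b) → a ∈ J → D.mul a b ∈ J
  mul_mem_right : ∀ a b, 𝒢.src (D.proj a) = 𝒢.rng (D.proj b) → b ∈ J → D.mul a b ∈ J

/-- A weak ideal of a Fell bundle: a Banach subbundle absorbing under multiplication. -/
structure IsWeakFellIdeal [TopologicalSpace G] [TopologicalSpace B]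
    (𝒢 : GroupoidStr G) (D : FellBundleData G B) (J : Set B) : Prop where
  subbundle : IsSubbundle D.toBanachBundleData J
  mul_mem_left : ∀ a b, 𝒢.src (D.proj a) = 𝒢.rng (D.proj b) → a ∈ J → D.mul a b ∈ J
  mul_mem_right : ∀ a b, 𝒢.src (D.proj a) = 𝒢.rng (D.proj b) → b ∈ J → D.mul a b ∈ J

end FellRieffel

namespace FellRieffel

/-! ### Equivalences of groupoids -/

/-- The data of an `(H,K)`-equivalence `T`: moment maps `ρ : T → H⁰ ⊆ H` and
`σ : T → K⁰ ⊆ K`, a left `H`-action and a right `K`-action (recorded as total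
functions, junk off the composable sets), and the translation maps `τH`, `τK`. -/
structure GroupoidEquivData (H K T : Type*) where
  ρ : T → H
  σ : T → K
  lact : H → T → T
  ract : T → K → T
  τH : T → T → H
  τK : T → T → K

/-- The axioms of an `(H,K)`-equivalence of topological groupoids: `T` is a free left
`H`-space and a free right `K`-space with commuting actions and open continuous moment
maps `ρ`, `σ` (onto the unit spaces) which induce bijections `T/K ≅ H⁰` and `H\T ≅ K⁰`;
the latter is encoded by the continuous open translation maps `τH` (defined for pairs
with `σ t = σ t'`, with `τH t t' · t' = t`) and `τK` (defined for pairs with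
`ρ t = ρ t'`, with `t · τK t t' = t'`). -/
structure IsGroupoidEquiv {H K T : Type*} [TopologicalSpace H] [TopologicalSpace K]
    [TopologicalSpace T] (𝒢H : GroupoidStr H) (𝒢K : GroupoidStr K)
    (E : GroupoidEquivData H K T) : Prop where
  ρ_unit : ∀ t, 𝒢H.IsUnit (E.ρ t)
  σ_unit : ∀ t, 𝒢K.IsUnit (E.σ t)
  continuous_ρ : Continuous E.ρ
  continuous_σ : Continuous E.σ
  isOpenMap_ρ : IsOpenMap E.ρ
  isOpenMap_σ : IsOpenMap E.σ
  surj_ρ : ∀ u : H, 𝒢H.IsUnit u → ∃ t, E.ρ t = u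
  surj_σ : ∀ u : K, 𝒢K.IsUnit u → ∃ t, E.σ t = u
  continuous_lact :
    Continuous (fun p : {p : H × T // 𝒢H.src p.1 = E.ρ p.2} => E.lact p.1.1 p.1.2)
  continuous_ract :
    Continuous (fun p : {p : T × K // E.σ p.1 = 𝒢K.rng p.2} => E.ract p.1.1 p.1.2)
  ρ_lact : ∀ h t, 𝒢H.src h = E.ρ t → E.ρ (E.lact h t) = 𝒢H.rng h
  σ_lact : ∀ h t, 𝒢H.src h = E.ρ t → E.σ (E.lact h t) = E.σ t
  ρ_ract : ∀ t k, E.σ t = 𝒢K.rng k → E.ρ (E.ract t k) = E.ρ t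
  σ_ract : ∀ t k, E.σ t = 𝒢K.rng k → E.σ (E.ract t k) = 𝒢K.src k
  lact_id : ∀ t, E.lact (E.ρ t) t = t
  lact_mul : ∀ h h' t, 𝒢H.src h = 𝒢H.rng h' → 𝒢H.src h' = E.ρ t →
    E.lact (𝒢H.mul h h') t = E.lact h (E.lact h' t)
  ract_id : ∀ t, E.ract t (E.σ t) = t
  ract_mul : ∀ t k k', E.σ t = 𝒢K.rng k → 𝒢K.src k = 𝒢K.rng k' →
    E.ract t (𝒢K.mul k k') = E.ract (E.ract t k) k'
  lact_ract : ∀ h t k, 𝒢H.src h = E.ρ t → E.σ t = 𝒢K.rng k →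
    E.lact h (E.ract t k) = E.ract (E.lact h t) k
  free_l : ∀ h t, 𝒢H.src h = E.ρ t → E.lact h t = t → h = E.ρ t
  free_r : ∀ t k, E.σ t = 𝒢K.rng k → E.ract t k = t → k = E.σ t
  τH_src : ∀ t t', E.σ t = E.σ t' → 𝒢H.src (E.τH t t') = E.ρ t'
  τH_spec : ∀ t t', E.σ t = E.σ t' → E.lact (E.τH t t') t' = t
  τK_rng : ∀ t t', E.ρ t = E.ρ t' → 𝒢K.rng (E.τK t t') = E.σ t
  τK_spec : ∀ t t', E.ρ t = E.ρ t' → E.ract t (E.τK t t') = t'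
  continuous_τH :
    Continuous (fun p : {p : T × T // E.σ p.1 = E.σ p.2} => E.τH p.1.1 p.1.2)
  continuous_τK :
    Continuous (fun p : {p : T × T // E.ρ p.1 = E.ρ p.2} => E.τK p.1.1 p.1.2)
  isOpenMap_τH : IsOpenMap (fun p : {p : T × T // E.σ p.1 = E.σ p.2} => E.τH p.1.1 p.1.2)
  isOpenMap_τK : IsOpenMap (fun p : {p : T × T // E.ρ p.1 = E.ρ p.2} => E.τK p.1.1 p.1.2)

/-! ### Equivalences of Fell bundles -/

/-- The data of a `ℬ`–`𝒞` equivalence: a Banach bundle `q : ℰ → T` together with a left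
`ℬ`-action, a right `𝒞`-action, and `ℬ`- and `𝒞`-valued inner products (all recorded as
total functions; values off the composable sets are irrelevant junk). -/
structure FellEquivData (T BB CC EE : Type*) where
  bund : BanachBundleData T EE
  lact : BB → EE → EE
  ract : EE → CC → EE
  linner : EE → EE → BB
  rinner : EE → EE → CC

/-- The complete setting of Section 3 of the paper: Fell bundles `p_ℬ : ℬ → H` and
`p_𝒞 : 𝒞 → K` over an `(H,K)`-equivalence `T`, and equivalence data `q : ℰ → T`. -/
structure EquivSetup (H K T BB CC EE : Type*) where
  𝒢H : GroupoidStr H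
  𝒢K : GroupoidStr K
  DB : FellBundleData H BB
  DC : FellBundleData K CC
  Teq : GroupoidEquivData H K T
  FE : FellEquivData T BB CC EE

variable {H K T BB CC EE : Type*}

namespace EquivSetup

variable (S : EquivSetup H K T BB CC EE)

universe uB uC uE

/-- Projection of the bundle `ℰ`. -/
def q : EE → T := S.FE.bund.proj

/-- The axioms making `S.FE` a `ℬ`–`𝒞` equivalence of Fell bundles
(Definition 2.14 of the paper). -/
structure IsFellEquiv [TopologicalSpace H] [TopologicalSpace K] [TopologicalSpace T]
    [TopologicalSpace BB] [TopologicalSpace CC] [TopologicalSpace EE] : Prop where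
  groupoidH : IsTopGroupoid S.𝒢H
  groupoidK : IsTopGroupoid S.𝒢K
  fellB : IsFellBundle.{_, _, uB} S.𝒢H S.DB
  fellC : IsFellBundle.{_, _, uC} S.𝒢K S.DC
  equivT : IsGroupoidEquiv S.𝒢H S.𝒢K S.Teq
  bund : IsBanachBundle.{_, _, uE} S.FE.bund
  -- the left ℬ-action
  proj_lact : ∀ b e, S.𝒢H.src (S.DB.proj b) = S.Teq.ρ (S.q e) →
    S.q (S.FE.lact b e) = S.Teq.lact (S.DB.proj b) (S.q e)
  continuous_lact : Continuous
    (fun p : {p : BB × EE // S.𝒢H.src (S.DB.proj p.1) = S.Teq.ρ (S.q p.2)} =>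
      S.FE.lact p.1.1 p.1.2)
  lact_add : ∀ b e f, S.𝒢H.src (S.DB.proj b) = S.Teq.ρ (S.q e) → S.q e = S.q f →
    S.FE.lact b (S.FE.bund.add e f) = S.FE.bund.add (S.FE.lact b e) (S.FE.lact b f)
  add_lact : ∀ b b' e, S.DB.proj b = S.DB.proj b' →
    S.𝒢H.src (S.DB.proj b) = S.Teq.ρ (S.q e) →
    S.FE.lact (S.DB.add b b') e = S.FE.bund.add (S.FE.lact b e) (S.FE.lact b' e)
  smul_lact : ∀ (z : ℂ) b e, S.𝒢H.src (S.DB.proj b) = S.Teq.ρ (S.q e) →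
    S.FE.lact (S.DB.smul z b) e = S.FE.bund.smul z (S.FE.lact b e)
  lact_smul : ∀ (z : ℂ) b e, S.𝒢H.src (S.DB.proj b) = S.Teq.ρ (S.q e) →
    S.FE.lact b (S.FE.bund.smul z e) = S.FE.bund.smul z (S.FE.lact b e)
  lact_lact : ∀ b b' e, S.𝒢H.src (S.DB.proj b) = S.𝒢H.rng (S.DB.proj b') →
    S.𝒢H.src (S.DB.proj b') = S.Teq.ρ (S.q e) →
    S.FE.lact (S.DB.mul b b') e = S.FE.lact b (S.FE.lact b' e)
  norm_lact_le : ∀ b e, S.𝒢H.src (S.DB.proj b) = S.Teq.ρ (S.q e) →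
    S.FE.bund.norm (S.FE.lact b e) ≤ S.DB.norm b * S.FE.bund.norm e
  -- the right 𝒞-action
  proj_ract : ∀ e c, S.Teq.σ (S.q e) = S.𝒢K.rng (S.DC.proj c) →
    S.q (S.FE.ract e c) = S.Teq.ract (S.q e) (S.DC.proj c)
  continuous_ract : Continuous
    (fun p : {p : EE × CC // S.Teq.σ (S.q p.1) = S.𝒢K.rng (S.DC.proj p.2)} =>
      S.FE.ract p.1.1 p.1.2)
  ract_add : ∀ e f c, S.q e = S.q f → S.Teq.σ (S.q e) = S.𝒢K.rng (S.DC.proj c) →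
    S.FE.ract (S.FE.bund.add e f) c = S.FE.bund.add (S.FE.ract e c) (S.FE.ract f c)
  add_ract : ∀ e c c', S.DC.proj c = S.DC.proj c' →
    S.Teq.σ (S.q e) = S.𝒢K.rng (S.DC.proj c) →
    S.FE.ract e (S.DC.add c c') = S.FE.bund.add (S.FE.ract e c) (S.FE.ract e c')
  smul_ract : ∀ (z : ℂ) e c, S.Teq.σ (S.q e) = S.𝒢K.rng (S.DC.proj c) →
    S.FE.ract (S.FE.bund.smul z e) c = S.FE.bund.smul z (S.FE.ract e c)
  ract_smul : ∀ (z : ℂ) e c, S.Teq.σ (S.q e) = S.𝒢K.rng (S.DC.proj c) →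
    S.FE.ract e (S.DC.smul z c) = S.FE.bund.smul z (S.FE.ract e c)
  ract_ract : ∀ e c c', S.Teq.σ (S.q e) = S.𝒢K.rng (S.DC.proj c) →
    S.𝒢K.src (S.DC.proj c) = S.𝒢K.rng (S.DC.proj c') →
    S.FE.ract e (S.DC.mul c c') = S.FE.ract (S.FE.ract e c) c'
  norm_ract_le : ∀ e c, S.Teq.σ (S.q e) = S.𝒢K.rng (S.DC.proj c) →
    S.FE.bund.norm (S.FE.ract e c) ≤ S.FE.bund.norm e * S.DC.norm c
  -- (E1)
  lact_ract : ∀ b e c, S.𝒢H.src (S.DB.proj b) = S.Teq.ρ (S.q e) →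
    S.Teq.σ (S.q e) = S.𝒢K.rng (S.DC.proj c) →
    S.FE.lact b (S.FE.ract e c) = S.FE.ract (S.FE.lact b e) c
  -- (E2)(a)
  proj_linner : ∀ e f, S.Teq.σ (S.q e) = S.Teq.σ (S.q f) →
    S.DB.proj (S.FE.linner e f) = S.Teq.τH (S.q e) (S.q f)
  proj_rinner : ∀ e f, S.Teq.ρ (S.q e) = S.Teq.ρ (S.q f) →
    S.DC.proj (S.FE.rinner e f) = S.Teq.τK (S.q e) (S.q f)
  continuous_linner : Continuous
    (fun p : {p : EE × EE // S.Teq.σ (S.q p.1) = S.Teq.σ (S.q p.2)} =>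
      S.FE.linner p.1.1 p.1.2)
  continuous_rinner : Continuous
    (fun p : {p : EE × EE // S.Teq.ρ (S.q p.1) = S.Teq.ρ (S.q p.2)} =>
      S.FE.rinner p.1.1 p.1.2)
  -- sesquilinearity
  linner_add_left : ∀ e e' f, S.q e = S.q e' → S.Teq.σ (S.q e) = S.Teq.σ (S.q f) →
    S.FE.linner (S.FE.bund.add e e') f = S.DB.add (S.FE.linner e f) (S.FE.linner e' f)
  linner_add_right : ∀ e f f', S.q f = S.q f' → S.Teq.σ (S.q e) = S.Teq.σ (S.q f) →
    S.FE.linner e (S.FE.bund.add f f') = S.DB.add (S.FE.linner e f) (S.FE.linner e f')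
  linner_smul_left : ∀ (z : ℂ) e f, S.Teq.σ (S.q e) = S.Teq.σ (S.q f) →
    S.FE.linner (S.FE.bund.smul z e) f = S.DB.smul z (S.FE.linner e f)
  linner_smul_right : ∀ (z : ℂ) e f, S.Teq.σ (S.q e) = S.Teq.σ (S.q f) →
    S.FE.linner e (S.FE.bund.smul z f) = S.DB.smul (starRingEnd ℂ z) (S.FE.linner e f)
  rinner_add_left : ∀ e e' f, S.q e = S.q e' → S.Teq.ρ (S.q e) = S.Teq.ρ (S.q f) →
    S.FE.rinner (S.FE.bund.add e e') f = S.DC.add (S.FE.rinner e f) (S.FE.rinner e' f)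
  rinner_add_right : ∀ e f f', S.q f = S.q f' → S.Teq.ρ (S.q e) = S.Teq.ρ (S.q f) →
    S.FE.rinner e (S.FE.bund.add f f') = S.DC.add (S.FE.rinner e f) (S.FE.rinner e f')
  rinner_smul_left : ∀ (z : ℂ) e f, S.Teq.ρ (S.q e) = S.Teq.ρ (S.q f) →
    S.FE.rinner (S.FE.bund.smul z e) f = S.DC.smul (starRingEnd ℂ z) (S.FE.rinner e f)
  rinner_smul_right : ∀ (z : ℂ) e f, S.Teq.ρ (S.q e) = S.Teq.ρ (S.q f) →
    S.FE.rinner e (S.FE.bund.smul z f) = S.DC.smul z (S.FE.rinner e f)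
  -- (E2)(b)
  linner_star : ∀ e f, S.Teq.σ (S.q e) = S.Teq.σ (S.q f) →
    S.DB.star (S.FE.linner e f) = S.FE.linner f e
  rinner_star : ∀ e f, S.Teq.ρ (S.q e) = S.Teq.ρ (S.q f) →
    S.DC.star (S.FE.rinner e f) = S.FE.rinner f e
  -- (E2)(c)
  linner_lact : ∀ b e f, S.𝒢H.src (S.DB.proj b) = S.Teq.ρ (S.q e) →
    S.Teq.σ (S.q e) = S.Teq.σ (S.q f) →
    S.FE.linner (S.FE.lact b e) f = S.DB.mul b (S.FE.linner e f)
  rinner_ract : ∀ e f c, S.Teq.ρ (S.q e) = S.Teq.ρ (S.q f) →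
    S.Teq.σ (S.q f) = S.𝒢K.rng (S.DC.proj c) →
    S.FE.rinner e (S.FE.ract f c) = S.DC.mul (S.FE.rinner e f) c
  -- (E2)(d)
  imprim : ∀ e f g, S.Teq.σ (S.q e) = S.Teq.σ (S.q f) →
    S.Teq.ρ (S.q f) = S.Teq.ρ (S.q g) →
    S.FE.lact (S.FE.linner e f) g = S.FE.ract e (S.FE.rinner f g)
  -- (E3): each fibre `E_t` is a `B_{ρ(t)}`–`C_{σ(t)}` imprimitivity bimodule
  linner_self_pos : ∀ e, ∃ b, S.DB.proj b = S.Teq.ρ (S.q e) ∧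
    S.FE.linner e e = S.DB.mul (S.DB.star b) b
  rinner_self_pos : ∀ e, ∃ c, S.DC.proj c = S.Teq.σ (S.q e) ∧
    S.FE.rinner e e = S.DC.mul (S.DC.star c) c
  norm_linner_self : ∀ e, S.DB.norm (S.FE.linner e e) = S.FE.bund.norm e ^ 2
  norm_rinner_self : ∀ e, S.DC.norm (S.FE.rinner e e) = S.FE.bund.norm e ^ 2
  linner_full : ∀ t : T, ∀ b, S.DB.proj b = S.Teq.ρ t →
    b ∈ fibSpanApprox S.DB.toBanachBundleData (S.Teq.ρ t)
      (fun w => ∃ e f, S.q e = t ∧ S.q f = t ∧ w = S.FE.linner e f)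
  rinner_full : ∀ t : T, ∀ c, S.DC.proj c = S.Teq.σ t →
    c ∈ fibSpanApprox S.DC.toBanachBundleData (S.Teq.σ t)
      (fun w => ∃ e f, S.q e = t ∧ S.q f = t ∧ w = S.FE.rinner e f)

/-! #### Submodules, products and the associated ideals -/

/-- `ℰ·𝒥`: the set of actual products `e·c` with `c ∈ 𝒥` (over all composable pairs). -/
def eDotJ (J : Set CC) : Set EE :=
  {z : EE | ∃ e c, c ∈ J ∧ S.Teq.σ (S.q e) = S.𝒢K.rng (S.DC.proj c) ∧ z = S.FE.ract e c}

/-- `𝒦·ℰ`: the set of actual products `b·e` with `b ∈ 𝒦`. -/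
def kDotE (Kk : Set BB) : Set EE :=
  {z : EE | ∃ b e, b ∈ Kk ∧ S.𝒢H.src (S.DB.proj b) = S.Teq.ρ (S.q e) ∧ z = S.FE.lact b e}

/-- A Banach `ℬ`–`𝒞` submodule of `ℰ`: a Banach subbundle stable under the two
actions. -/
structure IsBCSubmodule [TopologicalSpace T] [TopologicalSpace EE] (M : Set EE) :
    Prop where
  subbundle : IsSubbundle S.FE.bund M
  lact_mem : ∀ b e, S.𝒢H.src (S.DB.proj b) = S.Teq.ρ (S.q e) → e ∈ M → S.FE.lact b e ∈ M
  ract_mem : ∀ e c, S.Teq.σ (S.q e) = S.𝒢K.rng (S.DC.proj c) → e ∈ M →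
    S.FE.ract e c ∈ M

/-- A full Banach `ℬ`–`𝒞` submodule of `ℰ`: moreover `closure span B_h·M_t = M_{h·t}`
and `closure span M_t·C_k = M_{t·k}`. -/
structure IsFullBCSubmodule [TopologicalSpace T] [TopologicalSpace EE] (M : Set EE) :
    Prop where
  bcSubmodule : IsBCSubmodule S M
  lfull : ∀ (h : H) (t : T), S.𝒢H.src h = S.Teq.ρ t →
    M ∩ {e | S.q e = S.Teq.lact h t}
      = fibSpanApprox S.FE.bund (S.Teq.lact h t)
          (fun w => ∃ b m, S.DB.proj b = h ∧ m ∈ M ∧ S.q m = t ∧ w = S.FE.lact b m)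
  rfull : ∀ (t : T) (k : K), S.Teq.σ t = S.𝒢K.rng k →
    M ∩ {e | S.q e = S.Teq.ract t k}
      = fibSpanApprox S.FE.bund (S.Teq.ract t k)
          (fun w => ∃ m c, m ∈ M ∧ S.q m = t ∧ S.DC.proj c = k ∧ w = S.FE.ract m c)

/-- The ideal `R_t = closure span ⟨E_t, M_t⟩_𝒞` of `C_{σ(t)}` attached to a submodule
`ℳ` and `t ∈ T`. -/
def rIdeal (M : Set EE) (t : T) : Set CC :=
  fibSpanApprox S.DC.toBanachBundleData (S.Teq.σ t)
    (fun w => ∃ e m, S.q e = t ∧ m ∈ M ∧ S.q m = t ∧ w = S.FE.rinner e m)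

/-- The ideal `L_t = closure span ⟨M_t, E_t⟩_ℬ` of `B_{ρ(t)}` attached to a submodule
`ℳ` and `t ∈ T`. -/
def lIdeal (M : Set EE) (t : T) : Set BB :=
  fibSpanApprox S.DB.toBanachBundleData (S.Teq.ρ t)
    (fun w => ∃ m e, m ∈ M ∧ S.q m = t ∧ S.q e = t ∧ w = S.FE.linner m e)

/-- `𝒥_ℳ = ∐_{k ∈ K} R_{r(k)}·C_k`, the subset of `𝒞` attached to a submodule `ℳ`
(the fibre over `k` consisting of actual products `a·c`, `a ∈ R_{r(k)}`, `c ∈ C_k`). -/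
def jOfM (M : Set EE) : Set CC :=
  {z : CC | ∃ (t : T) (a c : CC), S.Teq.σ t = S.𝒢K.rng (S.DC.proj c) ∧
    a ∈ S.rIdeal M t ∧ z = S.DC.mul a c}

/-- `𝒦_ℳ = ∐_{h ∈ H} L_{r(h)}·B_h`, the subset of `ℬ` attached to a submodule `ℳ`. -/
def kOfM (M : Set EE) : Set BB :=
  {z : BB | ∃ (t : T) (a b : BB), S.Teq.ρ t = S.𝒢H.rng (S.DB.proj b) ∧
    a ∈ S.lIdeal M t ∧ z = S.DB.mul a b}

end EquivSetup

end FellRieffel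

namespace FellRieffel

open EquivSetup


/-! ### Auxiliary machinery for the proof -/

section BanachAux

variable {X B : Type*} {D : BanachBundleData X B}

namespace BanachBundleData

theorem sub_def (D : BanachBundleData X B) (a b : B) :
    D.sub a b = D.add a (D.smul (-1) b) := rfl

end BanachBundleData

variable [TopologicalSpace X] [TopologicalSpace B]

theorem IsBanachBundle.zero_smul' (hD : IsBanachBundle D) (b : B) :
    D.smul 0 b = D.zero (D.proj b) := by
  have h := hD.eq_zero_of_norm_eq_zero (D.smul 0 b) (by rw [hD.norm_smul]; simp)
  rwa [hD.proj_smul] at h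

theorem IsBanachBundle.smul_zero' (hD : IsBanachBundle D) (z : ℂ) (x : X) :
    D.smul z (D.zero x) = D.zero x := by
  have h := hD.eq_zero_of_norm_eq_zero (D.smul z (D.zero x))
    (by rw [hD.norm_smul, hD.norm_zero]; simp)
  rwa [hD.proj_smul, hD.proj_zero] at h

theorem IsBanachBundle.proj_sub (hD : IsBanachBundle D) {a b : B}
    (h : D.proj a = D.proj b) : D.proj (D.sub a b) = D.proj a := by
  rw [D.sub_def, hD.proj_add _ _ (by rw [hD.proj_smul]; exact h)]

theorem IsBanachBundle.sub_self' (hD : IsBanachBundle D) (a : B) :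
    D.sub a a = D.zero (D.proj a) := by
  rw [D.sub_def, hD.add_comm _ _ (by rw [hD.proj_smul]), hD.neg_add_cancel]

theorem IsBanachBundle.sub_add_cancel' (hD : IsBanachBundle D) {a b : B}
    (h : D.proj a = D.proj b) : D.add (D.sub a b) b = a := by
  rw [D.sub_def, hD.add_assoc a _ b (by rw [hD.proj_smul]; exact h) (by rw [hD.proj_smul]),
    hD.neg_add_cancel, ← h]
  rw [hD.add_comm a _ (by rw [hD.proj_zero]), hD.zero_add]

theorem IsBanachBundle.eq_of_sub_eq_zero' (hD : IsBanachBundle D) {a b : B}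
    (h : D.proj a = D.proj b) (hz : D.sub a b = D.zero (D.proj b)) : a = b := by
  have h2 := hD.sub_add_cancel' h
  rw [hz] at h2
  rw [← h2]
  exact hD.zero_add b

theorem IsBanachBundle.eq_of_forall_norm_sub_lt (hD : IsBanachBundle D) {a b : B}
    (h : D.proj a = D.proj b) (H : ∀ ε > 0, D.norm (D.sub a b) < ε) : a = b := by
  have h0 : D.norm (D.sub a b) = 0 := by
    by_contra hne
    exact lt_irrefl _ (H _ (lt_of_le_of_ne (hD.norm_nonneg _) (Ne.symm hne)))
  have := hD.eq_zero_of_norm_eq_zero _ h0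
  rw [hD.proj_sub h, h] at this
  exact hD.eq_of_sub_eq_zero' h this

theorem IsBanachBundle.sub_eq_add_sub_sub (hD : IsBanachBundle D) {a b c : B}
    (h1 : D.proj a = D.proj b) (h2 : D.proj b = D.proj c) :
    D.sub a c = D.add (D.sub a b) (D.sub b c) := by
  rw [D.sub_def, D.sub_def, D.sub_def]
  rw [hD.add_assoc a _ _ (by rw [hD.proj_smul]; exact h1)
    (by rw [hD.proj_smul, hD.proj_add _ _ (by rw [hD.proj_smul]; exact h2)])]
  congr 1
  rw [← hD.add_assoc _ b _ (by rw [hD.proj_smul]) (by rw [hD.proj_smul]; exact h2),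
    hD.neg_add_cancel]
  have : D.zero (D.proj b) = D.zero (D.proj (D.smul (-1) c)) := by
    rw [hD.proj_smul, h2]
  rw [this, hD.zero_add]

theorem IsBanachBundle.norm_sub_triangle (hD : IsBanachBundle D) {a b c : B}
    (h1 : D.proj a = D.proj b) (h2 : D.proj b = D.proj c) :
    D.norm (D.sub a c) ≤ D.norm (D.sub a b) + D.norm (D.sub b c) := by
  rw [hD.sub_eq_add_sub_sub h1 h2]
  exact hD.norm_add_le _ _ (by rw [hD.proj_sub h1, hD.proj_sub h2]; exact h1)

theorem IsBanachBundle.proj_fibSum (hD : IsBanachBundle D) {x : X} {l : List B}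
    (hl : ∀ z ∈ l, D.proj z = x) : D.proj (D.fibSum x l) = x := by
  induction l with
  | nil => exact hD.proj_zero x
  | cons b l ih =>
    have hb : D.proj b = x := hl b List.mem_cons_self
    have ihl := ih (fun z hz => hl z (List.mem_cons_of_mem b hz))
    show D.proj (D.add b (D.fibSum x l)) = x
    rw [hD.proj_add _ _ (by rw [hb, ihl]), hb]

theorem IsBanachBundle.fibSum_zero (hD : IsBanachBundle D) {x : X} {l : List B}
    (hl : ∀ z ∈ l, z = D.zero x) : D.fibSum x l = D.zero x := by
  induction l with
  | nil => rfl
  | cons b l ih =>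
    have hb : b = D.zero x := hl b List.mem_cons_self
    have ihl := ih (fun z hz => hl z (List.mem_cons_of_mem b hz))
    show D.add b (D.fibSum x l) = D.zero x
    rw [hb, ihl]
    have := hD.zero_add (D.zero x)
    rwa [hD.proj_zero] at this

end BanachAux

section GroupoidAux

variable {G : Type*} {𝒢 : GroupoidStr G}

theorem GroupoidStr.IsUnit.rng_eq {u : G} (hu : 𝒢.IsUnit u) : 𝒢.rng u = u := by
  conv_lhs => rw [← hu]
  rw [𝒢.rng_src, hu]

theorem GroupoidStr.IsUnit.inv_eq {u : G} (hu : 𝒢.IsUnit u) : 𝒢.inv u = u := by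
  have h1 := 𝒢.mul_id (𝒢.inv u)
  rw [𝒢.src_inv, hu.rng_eq] at h1
  rw [← h1, 𝒢.inv_mul, hu]

theorem GroupoidStr.IsUnit.mul_self {u : G} (hu : 𝒢.IsUnit u) : 𝒢.mul u u = u := by
  have := 𝒢.id_mul u
  rwa [hu.rng_eq] at this

end GroupoidAux

section FellAux

variable {G B : Type*} [TopologicalSpace G] [TopologicalSpace B]
  {𝒢 : GroupoidStr G} {D : FellBundleData G B}

theorem IsFellBundle.star_zero' (hF : IsFellBundle 𝒢 D) (x : G) :
    D.star (D.toBanachBundleData.zero x) = D.toBanachBundleData.zero (𝒢.inv x) := by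
  have h0 : D.toBanachBundleData.zero x
      = D.toBanachBundleData.smul 0 (D.toBanachBundleData.zero x) := by
    rw [hF.toIsBanachBundle.smul_zero']
  conv_lhs => rw [h0]
  rw [hF.star_smul]
  simp only [map_zero]
  rw [hF.toIsBanachBundle.zero_smul', hF.proj_star, hF.toIsBanachBundle.proj_zero]

theorem IsFellBundle.mul_zero' (hF : IsFellBundle 𝒢 D) {a : B} {x : G}
    (h : 𝒢.src (D.proj a) = 𝒢.rng x) :
    D.mul a (D.toBanachBundleData.zero x) = D.toBanachBundleData.zero (𝒢.mul (D.proj a) x) := by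
  have hx : 𝒢.src (D.proj a) = 𝒢.rng (D.proj (D.toBanachBundleData.zero x)) := by
    rw [hF.toIsBanachBundle.proj_zero]; exact h
  have h0 : D.toBanachBundleData.zero x
      = D.toBanachBundleData.smul 0 (D.toBanachBundleData.zero x) := by
    rw [hF.toIsBanachBundle.smul_zero']
  conv_lhs => rw [h0]
  rw [hF.mul_smul' 0 a _ hx, hF.toIsBanachBundle.zero_smul',
    hF.proj_mul _ _ hx, hF.toIsBanachBundle.proj_zero]

theorem IsFellBundle.zero_mul' (hF : IsFellBundle 𝒢 D) {b : B} {x : G}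
    (h : 𝒢.src x = 𝒢.rng (D.proj b)) :
    D.mul (D.toBanachBundleData.zero x) b = D.toBanachBundleData.zero (𝒢.mul x (D.proj b)) := by
  have hx : 𝒢.src (D.proj (D.toBanachBundleData.zero x)) = 𝒢.rng (D.proj b) := by
    rw [hF.toIsBanachBundle.proj_zero]; exact h
  have h0 : D.toBanachBundleData.zero x
      = D.toBanachBundleData.smul 0 (D.toBanachBundleData.zero x) := by
    rw [hF.toIsBanachBundle.smul_zero']
  conv_lhs => rw [h0]
  rw [hF.smul_mul 0 _ b hx, hF.toIsBanachBundle.zero_smul',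
    hF.proj_mul _ _ hx, hF.toIsBanachBundle.proj_zero]

theorem IsFellBundle.star_sub' (hF : IsFellBundle 𝒢 D) {a b : B}
    (h : D.proj a = D.proj b) :
    D.star (D.toBanachBundleData.sub a b)
      = D.toBanachBundleData.sub (D.star a) (D.star b) := by
  rw [D.toBanachBundleData.sub_def, D.toBanachBundleData.sub_def,
    hF.star_add _ _ (by rw [hF.toIsBanachBundle.proj_smul]; exact h), hF.star_smul]
  norm_num

theorem IsFellBundle.mul_fibSum (hF : IsFellBundle 𝒢 D) {a : B} {g : G} {l : List B}
    (hl : ∀ z ∈ l, D.proj z = g) (h : 𝒢.src (D.proj a) = 𝒢.rng g) :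
    D.mul a (D.toBanachBundleData.fibSum g l)
      = D.toBanachBundleData.fibSum (𝒢.mul (D.proj a) g) (l.map (D.mul a)) := by
  induction l with
  | nil => exact hF.mul_zero' h
  | cons b l ih =>
    have hb : D.proj b = g := hl b List.mem_cons_self
    have hl' : ∀ z ∈ l, D.proj z = g := fun z hz => hl z (List.mem_cons_of_mem b hz)
    show D.mul a (D.toBanachBundleData.add b (D.toBanachBundleData.fibSum g l)) = _
    rw [hF.mul_add a b _ (by rw [hb]; exact h)
      (by rw [hb, hF.toIsBanachBundle.proj_fibSum hl']), ih hl']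
    rfl

/-- If `c` lies in the fibre over a unit `u` and is approximable by sums of elements
annihilated on the left by `c*`, then `c = 0`. -/
theorem IsFellBundle.eq_zero_of_approx (hF : IsFellBundle 𝒢 D) {u : G}
    (hu : 𝒢.IsUnit u) {c : B} (hc : D.proj c = u)
    (H : ∀ ε > 0, ∃ l : List B,
      (∀ z ∈ l, D.proj z = u ∧ D.mul (D.star c) z = D.toBanachBundleData.zero u) ∧
      D.toBanachBundleData.norm (D.toBanachBundleData.sub c
        (D.toBanachBundleData.fibSum u l)) < ε) :
    c = D.toBanachBundleData.zero u := by
  have hB := hF.toIsBanachBundle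
  have hsc : D.proj (D.star c) = u := by rw [hF.proj_star, hc, hu.inv_eq]
  have hcomp : 𝒢.src (D.proj (D.star c)) = 𝒢.rng u := by rw [hsc, hu, hu.rng_eq]
  have key : ∀ ε > 0, D.toBanachBundleData.norm (D.mul (D.star c) c) < ε := by
    intro ε hε
    set ns := D.toBanachBundleData.norm (D.star c) with hns
    have hns0 : 0 ≤ ns := hB.norm_nonneg _
    have hε' : 0 < ε / (ns + 1) := by positivity
    obtain ⟨l, hl, hln⟩ := H _ hε'
    set s := D.toBanachBundleData.fibSum u l with hs_def
    have hps : D.proj s = u := hB.proj_fibSum (fun z hz => (hl z hz).1)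
    have hms : D.mul (D.star c) s = D.toBanachBundleData.zero u := by
      rw [hs_def, hF.mul_fibSum (fun z hz => (hl z hz).1) (by rw [hsc, hu, hu.rng_eq])]
      rw [hsc, hu.mul_self]
      refine hB.fibSum_zero ?_
      intro z hz
      obtain ⟨w, hw, rfl⟩ := List.mem_map.mp hz
      exact (hl w hw).2
    have hcs : D.proj c = D.proj s := by rw [hc, hps]
    have hcond1 : 𝒢.src (D.proj (D.star c))
        = 𝒢.rng (D.proj (D.toBanachBundleData.sub c s)) := by
      rw [hB.proj_sub hcs, hc, hsc, hu, hu.rng_eq]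
    have hdecomp : c = D.toBanachBundleData.add (D.toBanachBundleData.sub c s) s :=
      (hB.sub_add_cancel' hcs).symm
    have hcs2 : D.proj (D.toBanachBundleData.sub c s) = D.proj s := by
      rw [hB.proj_sub hcs]; exact hcs
    have hexp := hF.mul_add (D.star c) (D.toBanachBundleData.sub c s) s hcond1 hcs2
    rw [← hdecomp] at hexp
    have hpm : D.proj (D.mul (D.star c) (D.toBanachBundleData.sub c s)) = u := by
      rw [hF.proj_mul _ _ hcond1, hsc, hB.proj_sub hcs, hc, hu.mul_self]
    have heq : D.mul (D.star c) c = D.mul (D.star c) (D.toBanachBundleData.sub c s) := by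
      rw [hexp, hms, hB.add_comm _ _ (by rw [hpm, hB.proj_zero])]
      have := hB.zero_add (D.mul (D.star c) (D.toBanachBundleData.sub c s))
      rwa [hpm] at this
    rw [heq]
    calc D.toBanachBundleData.norm (D.mul (D.star c) (D.toBanachBundleData.sub c s))
        ≤ ns * D.toBanachBundleData.norm (D.toBanachBundleData.sub c s) :=
          hF.norm_mul_le _ _ hcond1
      _ < ε := by
          have hnsub : D.toBanachBundleData.norm (D.toBanachBundleData.sub c s)
              < ε / (ns + 1) := hln
          have hnsub0 : 0 ≤ D.toBanachBundleData.norm (D.toBanachBundleData.sub c s) :=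
            hB.norm_nonneg _
          have hkey : ε / (ns + 1) * (ns + 1) = ε := div_mul_cancel₀ ε (by positivity)
          nlinarith [mul_le_mul_of_nonneg_left hnsub.le hns0]
  have h0 : D.toBanachBundleData.norm (D.mul (D.star c) c) = 0 := by
    by_contra hne
    exact lt_irrefl _ (key _ (lt_of_le_of_ne (hF.toIsBanachBundle.norm_nonneg _)
      (Ne.symm hne)))
  have hcn : D.toBanachBundleData.norm c = 0 := by
    have := hF.norm_star_mul_self c
    rw [h0] at this
    nlinarith [hF.toIsBanachBundle.norm_nonneg c]
  have := hF.toIsBanachBundle.eq_zero_of_norm_eq_zero c hcn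
  rwa [hc] at this

end FellAux

section CStarApprox

/-- Key C*-algebra approximation: for `a = c* c` there is a selfadjoint `v`
(`v = f(a)` for `f x = x/(x+δ)`) with `‖(1-v) a (1-v)‖ < ε`. -/
theorem cstar_approx {A : Type*} [NonUnitalCStarAlgebra A] (c : A) {ε : ℝ} (hε : 0 < ε) :
    ∃ v : A, star v = v ∧
      ‖(star c * c - star c * c * v) - (v * (star c * c) - v * (star c * c) * v)‖ < ε := by
  set a := star c * c with ha_def
  have ha : IsSelfAdjoint a := IsSelfAdjoint.star_mul_self c
  have hspec : ∀ x ∈ quasispectrum ℝ a, 0 ≤ x := by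
    intro x hx
    rw [Unitization.quasispectrum_eq_spectrum_inr' ℝ ℂ] at hx
    have : (a : Unitization ℂ A) = star (c : Unitization ℂ A) * (c : Unitization ℂ A) := by
      simp [ha_def]
    rw [this] at hx
    exact spectrum_star_mul_self_nonneg x hx
  set f : ℝ → ℝ := fun x => x / (|x| + ε) with hf_def
  have hfc : Continuous f := by
    apply Continuous.div continuous_id (by continuity)
    intro x; positivity
  have hf : ContinuousOn f (quasispectrum ℝ a) := hfc.continuousOn
  have hf0 : f 0 = 0 := by simp [hf_def]
  have hid : ContinuousOn (fun x : ℝ => x) (quasispectrum ℝ a) := continuousOn_id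
  have hidf : ContinuousOn (fun x : ℝ => x * f x) (quasispectrum ℝ a) :=
    hid.mul hf
  have hfid : ContinuousOn (fun x : ℝ => f x * x) (quasispectrum ℝ a) := hf.mul hid
  have hfidf : ContinuousOn (fun x : ℝ => f x * x * f x) (quasispectrum ℝ a) := hfid.mul hf
  refine ⟨cfcₙ f a, ?_, ?_⟩
  · exact (cfcₙ_predicate f a).star_eq
  · set v := cfcₙ f a with hv_def
    have h1 : a * v = cfcₙ (fun x : ℝ => x * f x) a := by
      rw [cfcₙ_mul _ f a hid (by simp) hf hf0, cfcₙ_id' ℝ a ha]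
    have h2 : v * a = cfcₙ (fun x : ℝ => f x * x) a := by
      rw [cfcₙ_mul f _ a hf hf0 hid (by simp), cfcₙ_id' ℝ a ha]
    have h3 : v * a * v = cfcₙ (fun x : ℝ => f x * x * f x) a := by
      rw [cfcₙ_mul _ f a hfid (by simp [hf0]) hf hf0, ← h2]
    have h4 : a = cfcₙ (fun x : ℝ => x) a := (cfcₙ_id' ℝ a ha).symm
    rw [h3, h1, h2]
    nth_rewrite 1 [h4]
    rw [← cfcₙ_sub _ _ a hid (by simp) hidf (by simp [hf0]),
      ← cfcₙ_sub _ _ a hfid (by simp) hfidf (by simp [hf0]),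
      ← cfcₙ_sub _ _ a (by exact hid.sub hidf) (by simp [hf0])
        (by exact hfid.sub hfidf) (by simp [hf0])]
    refine norm_cfcₙ_lt fun x hx => ?_
    have hx0 : 0 ≤ x := hspec x hx
    have hd : 0 < x + ε := by positivity
    have hfx : f x = x / (x + ε) := by simp [hf_def, abs_of_nonneg hx0]
    have key : x - x * f x - (f x * x - f x * x * f x) = x * (ε / (x + ε))^2 := by
      rw [hfx]; field_simp; ring
    rw [key]
    have hle : x * (ε / (x + ε))^2 ≤ ε / 4 := by
      rw [div_pow, ← mul_div_assoc]
      rw [div_le_div_iff₀ (by positivity) (by norm_num)]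
      nlinarith [sq_nonneg (x - ε)]
    calc ‖x * (ε / (x + ε))^2‖ = x * (ε / (x + ε))^2 := by
          rw [Real.norm_eq_abs, abs_of_nonneg (by positivity)]
      _ ≤ ε / 4 := hle
      _ < ε := by linarith

variable {G B : Type*} [TopologicalSpace G] [TopologicalSpace B]
  {𝒢 : GroupoidStr G} {D : FellBundleData G B}

/-- The fibre of a Fell bundle over a unit `u` contains, for each `c` in the fibre,
quasi-central approximate units adapted to `a = c* c`. -/
theorem IsFellBundle.exists_approx_unit (hF : IsFellBundle 𝒢 D) {u : G}
    (hu : 𝒢.IsUnit u) {c : B} (hc : D.proj c = u) {ε : ℝ} (hε : 0 < ε) :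
    ∃ v, D.proj v = u ∧ D.star v = v ∧
      D.toBanachBundleData.norm (D.toBanachBundleData.sub
        (D.toBanachBundleData.sub (D.mul (D.star c) c)
          (D.mul (D.mul (D.star c) c) v))
        (D.toBanachBundleData.sub (D.mul v (D.mul (D.star c) c))
          (D.mul (D.mul v (D.mul (D.star c) c)) v))) < ε := by
  have hB := hF.toIsBanachBundle
  have hmulproj : ∀ x y : {b : B // D.proj b = u},
      D.proj (D.mul x.1 y.1) = u := by
    intro x y
    rw [hF.proj_mul _ _ (by rw [x.2, y.2, hu, hu.rng_eq]), x.2, y.2, hu.mul_self]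
  have hmulcond : ∀ x y : {b : B // D.proj b = u},
      𝒢.src (D.proj x.1) = 𝒢.rng (D.proj y.1) := by
    intro x y; rw [x.2, y.2, hu, hu.rng_eq]
  have hpq : ∀ x y : {b : B // D.proj b = u}, D.proj x.1 = D.proj y.1 := by
    intro x y; rw [x.2, y.2]
  letI instAdd : Add {b : B // D.proj b = u} :=
    ⟨fun x y => ⟨D.toBanachBundleData.add x.1 y.1,
      by rw [hB.proj_add _ _ (hpq x y), x.2]⟩⟩
  letI instZero : Zero {b : B // D.proj b = u} :=
    ⟨⟨D.toBanachBundleData.zero u, hB.proj_zero u⟩⟩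
  letI instNeg : Neg {b : B // D.proj b = u} :=
    ⟨fun x => ⟨D.toBanachBundleData.smul (-1) x.1, by rw [hB.proj_smul, x.2]⟩⟩
  letI instSub : Sub {b : B // D.proj b = u} :=
    ⟨fun x y => ⟨D.toBanachBundleData.sub x.1 y.1,
      by rw [hB.proj_sub (hpq x y), x.2]⟩⟩
  letI instACG : AddCommGroup {b : B // D.proj b = u} :=
  { add := (· + ·)
    zero := 0
    neg := Neg.neg
    sub := Sub.sub
    nsmul := nsmulRec
    zsmul := zsmulRec
    add_assoc := fun x y z => Subtype.ext (hB.add_assoc _ _ _ (hpq x y) (hpq y z))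
    zero_add := fun x => Subtype.ext (by
      have := hB.zero_add x.1; rwa [x.2] at this)
    add_zero := fun x => Subtype.ext (by
      have h1 := hB.add_comm x.1 (D.toBanachBundleData.zero u)
        (by rw [hB.proj_zero, x.2])
      have h2 := hB.zero_add x.1
      rw [x.2] at h2
      show D.toBanachBundleData.add x.1 (D.toBanachBundleData.zero u) = x.1
      rw [h1, h2])
    add_comm := fun x y => Subtype.ext (hB.add_comm _ _ (hpq x y))
    neg_add_cancel := fun x => Subtype.ext (by
      have := hB.neg_add_cancel x.1; rwa [x.2] at this)
    sub_eq_add_neg := fun x y => Subtype.ext rfl }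
  letI instMod : Module ℂ {b : B // D.proj b = u} :=
  { smul := fun z x => ⟨D.toBanachBundleData.smul z x.1, by rw [hB.proj_smul, x.2]⟩
    one_smul := fun x => Subtype.ext (hB.one_smul x.1)
    mul_smul := fun z w x => Subtype.ext (hB.mul_smul z w x.1)
    smul_zero := fun z => Subtype.ext (hB.smul_zero' z u)
    smul_add := fun z x y => Subtype.ext (hB.smul_add z x.1 y.1 (hpq x y))
    add_smul := fun z w x => Subtype.ext (hB.add_smul z w x.1)
    zero_smul := fun x => Subtype.ext (by
      have := hB.zero_smul' x.1; rwa [x.2] at this) }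
  letI instNUR : NonUnitalRing {b : B // D.proj b = u} :=
  { instACG with
    mul := fun x y => ⟨D.mul x.1 y.1, hmulproj x y⟩
    left_distrib := fun x y z => Subtype.ext
      (hF.mul_add x.1 y.1 z.1 (hmulcond x y) (hpq y z))
    right_distrib := fun x y z => Subtype.ext
      (hF.add_mul x.1 y.1 z.1 (hpq x y) (hmulcond x z))
    zero_mul := fun x => Subtype.ext (by
      have := hF.zero_mul' (b := x.1) (x := u) (by rw [x.2, hu, hu.rng_eq])
      rw [x.2, hu.mul_self] at this
      exact this)
    mul_zero := fun x => Subtype.ext (by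
      have := hF.mul_zero' (a := x.1) (x := u) (by rw [x.2, hu, hu.rng_eq])
      rw [x.2, hu.mul_self] at this
      exact this)
    mul_assoc := fun x y z => Subtype.ext
      (hF.mul_assoc' x.1 y.1 z.1 (hmulcond x y) (hmulcond y z)) }
  letI instNACG : NormedAddCommGroup {b : B // D.proj b = u} :=
    AddGroupNorm.toNormedAddCommGroup
    { toFun := fun x => D.toBanachBundleData.norm x.1
      map_zero' := hB.norm_zero u
      add_le' := fun x y => hB.norm_add_le _ _ (hpq x y)
      neg' := fun x => by
        show D.toBanachBundleData.norm (D.toBanachBundleData.smul (-1) x.1) = _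
        rw [hB.norm_smul]; simp
      eq_zero_of_map_eq_zero' := fun x h => Subtype.ext (by
        have := hB.eq_zero_of_norm_eq_zero x.1 h; rwa [x.2] at this) }
  letI instNUNR : NonUnitalNormedRing {b : B // D.proj b = u} :=
  { instNUR, instNACG with
    dist_eq := fun x y => rfl
    norm_mul_le := fun x y => hF.norm_mul_le x.1 y.1 (hmulcond x y) }
  letI instCS : CompleteSpace {b : B // D.proj b = u} := by
    apply Metric.complete_of_cauchySeq_tendsto
    intro useq hcauchy
    have hcc : ∀ δ > (0:ℝ), ∃ N, ∀ m ≥ N, ∀ n ≥ N,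
        D.toBanachBundleData.norm (D.toBanachBundleData.sub (useq m).1 (useq n).1) < δ := by
      intro δ hδ
      obtain ⟨N, hN⟩ := Metric.cauchySeq_iff.mp hcauchy δ hδ
      exact ⟨N, fun m hm n hn => by
        have := hN m hm n hn; rw [dist_eq_norm] at this; exact this⟩
    obtain ⟨b, hbp, hbt⟩ := hB.complete u (fun n => (useq n).1) (fun n => (useq n).2) hcc
    refine ⟨⟨b, hbp⟩, ?_⟩
    rw [tendsto_iff_dist_tendsto_zero]
    simp only [dist_eq_norm]
    exact hbt
  letI instNS : NormedSpace ℂ {b : B // D.proj b = u} :=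
  { norm_smul_le := fun z x => le_of_eq (hB.norm_smul z x.1) }
  letI instIST : IsScalarTower ℂ {b : B // D.proj b = u} {b : B // D.proj b = u} :=
  ⟨fun z x y => Subtype.ext (hF.smul_mul z x.1 y.1 (hmulcond x y))⟩
  letI instSCC : SMulCommClass ℂ {b : B // D.proj b = u} {b : B // D.proj b = u} :=
  ⟨fun z x y => Subtype.ext ((hF.mul_smul' z x.1 y.1 (hmulcond x y)).symm)⟩
  letI instSR : StarRing {b : B // D.proj b = u} :=
  { star := fun x => ⟨D.star x.1, by rw [hF.proj_star, x.2, hu.inv_eq]⟩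
    star_involutive := fun x => Subtype.ext (hF.star_star x.1)
    star_mul := fun x y => Subtype.ext (hF.star_mul' x.1 y.1 (hmulcond x y))
    star_add := fun x y => Subtype.ext (hF.star_add x.1 y.1 (hpq x y)) }
  letI instSM : StarModule ℂ {b : B // D.proj b = u} :=
  ⟨fun z x => Subtype.ext (by
    show D.star (D.toBanachBundleData.smul z x.1) = _
    rw [hF.star_smul, starRingEnd_apply]
    rfl)⟩
  letI instCSR : CStarRing {b : B // D.proj b = u} :=
  ⟨fun x => by
    show ‖x‖ * ‖x‖ ≤ ‖star x * x‖
    have h1 : ‖star x * x‖ = D.toBanachBundleData.norm (D.mul (D.star x.1) x.1) := rfl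
    rw [h1, hF.norm_star_mul_self x.1, sq]
    exact le_refl _⟩
  letI instNCA : NonUnitalCStarAlgebra {b : B // D.proj b = u} := { }
  obtain ⟨v, hvstar, hvnorm⟩ := cstar_approx (⟨c, hc⟩ : {b : B // D.proj b = u}) hε
  exact ⟨v.1, v.2, congrArg Subtype.val hvstar, hvnorm⟩

end CStarApprox

section EquivGroupoidAux

variable {H K T : Type*} [TopologicalSpace H] [TopologicalSpace K] [TopologicalSpace T]
  {𝒢H : GroupoidStr H} {𝒢K : GroupoidStr K} {E : GroupoidEquivData H K T}

theorem IsGroupoidEquiv.lact_cancel (hT : IsGroupoidEquiv 𝒢H 𝒢K E) {h h' : H} {t : T}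
    (hh : 𝒢H.src h = E.ρ t) (hh' : 𝒢H.src h' = E.ρ t)
    (heq : E.lact h t = E.lact h' t) : h = h' := by
  have e1 := hT.ρ_lact h t hh
  have e2 := hT.ρ_lact h' t hh'
  rw [heq] at e1
  have hrng : 𝒢H.rng h' = 𝒢H.rng h := e2.symm.trans e1
  have hsrcinv : 𝒢H.src (𝒢H.inv h) = 𝒢H.rng h' := by rw [𝒢H.src_inv, hrng]
  have hg : 𝒢H.mul (𝒢H.inv h) h' = E.ρ t := by
    apply hT.free_l _ t (by rw [𝒢H.src_mul _ _ hsrcinv, hh'])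
    rw [hT.lact_mul _ _ _ hsrcinv hh', ← heq,
      ← hT.lact_mul _ _ _ (by rw [𝒢H.src_inv]) hh, 𝒢H.inv_mul, hh, hT.lact_id]
  refine Eq.symm ?_
  calc h' = 𝒢H.mul (𝒢H.rng h') h' := (𝒢H.id_mul h').symm
    _ = 𝒢H.mul (𝒢H.mul h (𝒢H.inv h)) h' := by rw [𝒢H.mul_inv, hrng]
    _ = 𝒢H.mul h (𝒢H.mul (𝒢H.inv h) h') :=
        𝒢H.mul_assoc h (𝒢H.inv h) h' (𝒢H.rng_inv h).symm hsrcinv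
    _ = 𝒢H.mul h (E.ρ t) := by rw [hg]
    _ = h := by rw [← hh, 𝒢H.mul_id]

theorem IsGroupoidEquiv.ract_cancel (hT : IsGroupoidEquiv 𝒢H 𝒢K E) {k k' : K} {t : T}
    (hk : E.σ t = 𝒢K.rng k) (hk' : E.σ t = 𝒢K.rng k')
    (heq : E.ract t k = E.ract t k') : k = k' := by
  have e1 := hT.σ_ract t k hk
  have e2 := hT.σ_ract t k' hk'
  rw [heq] at e1
  have hsrc : 𝒢K.src k = 𝒢K.src k' := e1.symm.trans e2
  have hck : 𝒢K.src k' = 𝒢K.rng (𝒢K.inv k) := by rw [𝒢K.rng_inv, hsrc]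
  have hg : 𝒢K.mul k' (𝒢K.inv k) = E.σ t := by
    apply hT.free_r t _ (by rw [𝒢K.rng_mul _ _ hck, ← hk'])
    rw [hT.ract_mul t _ _ hk' hck, ← heq,
      ← hT.ract_mul t _ _ hk (𝒢K.rng_inv k).symm, 𝒢K.mul_inv, ← hk, hT.ract_id]
  calc k = 𝒢K.mul (𝒢K.rng k) k := (𝒢K.id_mul k).symm
    _ = 𝒢K.mul (E.σ t) k := by rw [hk]
    _ = 𝒢K.mul (𝒢K.mul k' (𝒢K.inv k)) k := by rw [hg]
    _ = 𝒢K.mul k' (𝒢K.mul (𝒢K.inv k) k) :=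
        𝒢K.mul_assoc k' (𝒢K.inv k) k hck (𝒢K.src_inv k)
    _ = 𝒢K.mul k' (𝒢K.src k) := by rw [𝒢K.inv_mul]
    _ = k' := by rw [hsrc, 𝒢K.mul_id]

theorem IsGroupoidEquiv.τH_lact (hT : IsGroupoidEquiv 𝒢H 𝒢K E) {h : H} {t : T}
    (hh : 𝒢H.src h = E.ρ t) : E.τH (E.lact h t) t = h := by
  have hσ : E.σ (E.lact h t) = E.σ t := hT.σ_lact h t hh
  exact hT.lact_cancel (hT.τH_src (E.lact h t) t hσ) hh (hT.τH_spec (E.lact h t) t hσ)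

theorem IsGroupoidEquiv.τK_ract (hT : IsGroupoidEquiv 𝒢H 𝒢K E) {t : T} {k : K}
    (hk : E.σ t = 𝒢K.rng k) : E.τK t (E.ract t k) = k := by
  have hρ : E.ρ t = E.ρ (E.ract t k) := (hT.ρ_ract t k hk).symm
  exact hT.ract_cancel (hT.τK_rng t (E.ract t k) hρ).symm hk (hT.τK_spec t (E.ract t k) hρ)

theorem IsGroupoidEquiv.τK_src (hT : IsGroupoidEquiv 𝒢H 𝒢K E) {t t' : T}
    (h : E.ρ t = E.ρ t') : 𝒢K.src (E.τK t t') = E.σ t' := by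
  have h1 := hT.σ_ract t (E.τK t t') (hT.τK_rng t t' h).symm
  rw [hT.τK_spec t t' h] at h1
  exact h1.symm

theorem IsGroupoidEquiv.τH_rng (hT : IsGroupoidEquiv 𝒢H 𝒢K E) {t t' : T}
    (h : E.σ t = E.σ t') : 𝒢H.rng (E.τH t t') = E.ρ t := by
  have h1 := hT.ρ_lact (E.τH t t') t' (hT.τH_src t t' h)
  rw [hT.τH_spec t t' h] at h1
  exact h1.symm

theorem IsGroupoidEquiv.τK_self (hT : IsGroupoidEquiv 𝒢H 𝒢K E) (t : T) :
    E.τK t t = E.σ t := by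
  refine hT.ract_cancel (hT.τK_rng t t rfl).symm (hT.σ_unit t).rng_eq.symm ?_
  rw [hT.τK_spec t t rfl, hT.ract_id]

theorem IsGroupoidEquiv.τH_self (hT : IsGroupoidEquiv 𝒢H 𝒢K E) (t : T) :
    E.τH t t = E.ρ t := by
  refine hT.lact_cancel (hT.τH_src t t rfl) (hT.ρ_unit t) ?_
  rw [hT.τH_spec t t rfl, hT.lact_id]

end EquivGroupoidAux

namespace EquivSetup.IsFellEquiv

variable {H K T BB CC EE : Type*} [TopologicalSpace H] [TopologicalSpace K]
  [TopologicalSpace T] [TopologicalSpace BB] [TopologicalSpace CC] [TopologicalSpace EE]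
  {S : EquivSetup H K T BB CC EE} (hS : S.IsFellEquiv)

include hS

theorem q_zero (t : T) : S.q (S.FE.bund.zero t) = t := hS.bund.proj_zero t

theorem q_smul (z : ℂ) (e : EE) : S.q (S.FE.bund.smul z e) = S.q e := hS.bund.proj_smul z e

theorem ract_zero' {e : EE} {u : K} (h : S.Teq.σ (S.q e) = S.𝒢K.rng u) :
    S.FE.ract e (S.DC.toBanachBundleData.zero u)
      = S.FE.bund.zero (S.Teq.ract (S.q e) u) := by
  have hC := hS.fellC.toIsBanachBundle
  have hc : S.Teq.σ (S.q e) = S.𝒢K.rng (S.DC.proj (S.DC.toBanachBundleData.zero u)) := by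
    rw [hC.proj_zero]; exact h
  have h0 : S.DC.toBanachBundleData.zero u
      = S.DC.toBanachBundleData.smul 0 (S.DC.toBanachBundleData.zero u) :=
    (hC.smul_zero' 0 u).symm
  conv_lhs => rw [h0]
  rw [hS.ract_smul 0 e _ hc, hS.bund.zero_smul']
  have hqq : S.FE.bund.proj (S.FE.ract e (S.DC.toBanachBundleData.zero u))
      = S.Teq.ract (S.q e) u := by
    have := hS.proj_ract e _ hc
    rw [hC.proj_zero] at this
    exact this
  rw [hqq]

theorem zero_ract' {t' : T} {c : CC} (h : S.Teq.σ t' = S.𝒢K.rng (S.DC.proj c)) :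
    S.FE.ract (S.FE.bund.zero t') c = S.FE.bund.zero (S.Teq.ract t' (S.DC.proj c)) := by
  have hc : S.Teq.σ (S.q (S.FE.bund.zero t')) = S.𝒢K.rng (S.DC.proj c) := by
    rw [hS.q_zero]; exact h
  have h0 : S.FE.bund.zero t' = S.FE.bund.smul 0 (S.FE.bund.zero t') :=
    (hS.bund.smul_zero' 0 t').symm
  conv_lhs => rw [h0]
  rw [hS.smul_ract 0 _ c hc, hS.bund.zero_smul']
  have hqq : S.FE.bund.proj (S.FE.ract (S.FE.bund.zero t') c)
      = S.Teq.ract t' (S.DC.proj c) := by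
    have := hS.proj_ract _ c hc
    rw [hS.q_zero] at this
    exact this
  rw [hqq]

theorem lact_zero' {b : BB} {t' : T} (h : S.𝒢H.src (S.DB.proj b) = S.Teq.ρ t') :
    S.FE.lact b (S.FE.bund.zero t')
      = S.FE.bund.zero (S.Teq.lact (S.DB.proj b) t') := by
  have hc : S.𝒢H.src (S.DB.proj b) = S.Teq.ρ (S.q (S.FE.bund.zero t')) := by
    rw [hS.q_zero]; exact h
  have h0 : S.FE.bund.zero t' = S.FE.bund.smul 0 (S.FE.bund.zero t') :=
    (hS.bund.smul_zero' 0 t').symm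
  conv_lhs => rw [h0]
  rw [hS.lact_smul 0 b _ hc, hS.bund.zero_smul']
  have hqq : S.FE.bund.proj (S.FE.lact b (S.FE.bund.zero t'))
      = S.Teq.lact (S.DB.proj b) t' := by
    have := hS.proj_lact b _ hc
    rw [hS.q_zero] at this
    exact this
  rw [hqq]

theorem zero_lact' {u : H} {e : EE} (h : S.𝒢H.src u = S.Teq.ρ (S.q e)) :
    S.FE.lact (S.DB.toBanachBundleData.zero u) e
      = S.FE.bund.zero (S.Teq.lact u (S.q e)) := by
  have hB := hS.fellB.toIsBanachBundle
  have hc : S.𝒢H.src (S.DB.proj (S.DB.toBanachBundleData.zero u)) = S.Teq.ρ (S.q e) := by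
    rw [hB.proj_zero]; exact h
  have h0 : S.DB.toBanachBundleData.zero u
      = S.DB.toBanachBundleData.smul 0 (S.DB.toBanachBundleData.zero u) :=
    (hB.smul_zero' 0 u).symm
  conv_lhs => rw [h0]
  rw [hS.smul_lact 0 _ e hc, hS.bund.zero_smul']
  have hqq : S.FE.bund.proj (S.FE.lact (S.DB.toBanachBundleData.zero u) e)
      = S.Teq.lact u (S.q e) := by
    have := hS.proj_lact _ e hc
    rw [hB.proj_zero] at this
    exact this
  rw [hqq]

theorem ract_sub' {e : EE} {c c' : CC} (hcc' : S.DC.proj c = S.DC.proj c')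
    (h : S.Teq.σ (S.q e) = S.𝒢K.rng (S.DC.proj c)) :
    S.FE.ract e (S.DC.toBanachBundleData.sub c c')
      = S.FE.bund.sub (S.FE.ract e c) (S.FE.ract e c') := by
  rw [BanachBundleData.sub_def, BanachBundleData.sub_def,
    hS.add_ract e c _ (by rw [hS.fellC.toIsBanachBundle.proj_smul]; exact hcc') h,
    hS.ract_smul (-1) e c' (by rw [← hcc']; exact h)]

theorem sub_lact' {b b' : BB} {e : EE} (hbb' : S.DB.proj b = S.DB.proj b')
    (h : S.𝒢H.src (S.DB.proj b) = S.Teq.ρ (S.q e)) :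
    S.FE.lact (S.DB.toBanachBundleData.sub b b') e
      = S.FE.bund.sub (S.FE.lact b e) (S.FE.lact b' e) := by
  rw [BanachBundleData.sub_def, BanachBundleData.sub_def,
    hS.add_lact b _ e (by rw [hS.fellB.toIsBanachBundle.proj_smul]; exact hbb') h,
    hS.smul_lact (-1) b' e (by rw [← hbb']; exact h)]

theorem ract_fibSum' {e : EE} {u : K} {l : List CC}
    (hl : ∀ z ∈ l, S.DC.proj z = u) (h : S.Teq.σ (S.q e) = S.𝒢K.rng u) :
    S.FE.ract e (S.DC.toBanachBundleData.fibSum u l)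
      = S.FE.bund.fibSum (S.Teq.ract (S.q e) u) (l.map (S.FE.ract e)) := by
  induction l with
  | nil => exact hS.ract_zero' h
  | cons z l ih =>
    have hz : S.DC.proj z = u := hl z List.mem_cons_self
    have hl' : ∀ w ∈ l, S.DC.proj w = u := fun w hw => hl w (List.mem_cons_of_mem z hw)
    show S.FE.ract e (S.DC.toBanachBundleData.add z _) = _
    rw [hS.add_ract e z _ (by rw [hz, hS.fellC.toIsBanachBundle.proj_fibSum hl'])
      (by rw [hz]; exact h), ih hl']
    rfl

theorem fibSum_lact' {e : EE} {u : H} {l : List BB}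
    (hl : ∀ z ∈ l, S.DB.proj z = u) (h : S.𝒢H.src u = S.Teq.ρ (S.q e)) :
    S.FE.lact (S.DB.toBanachBundleData.fibSum u l) e
      = S.FE.bund.fibSum (S.Teq.lact u (S.q e)) (l.map (fun w => S.FE.lact w e)) := by
  induction l with
  | nil => exact hS.zero_lact' h
  | cons z l ih =>
    have hz : S.DB.proj z = u := hl z List.mem_cons_self
    have hl' : ∀ w ∈ l, S.DB.proj w = u := fun w hw => hl w (List.mem_cons_of_mem z hw)
    show S.FE.lact (S.DB.toBanachBundleData.add z _) e = _
    rw [hS.add_lact z _ e (by rw [hz, hS.fellB.toIsBanachBundle.proj_fibSum hl'])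
      (by rw [hz]; exact h), ih hl']
    rfl

theorem rinner_zero_left' {t' : T} {f : EE} (h : S.Teq.ρ t' = S.Teq.ρ (S.q f)) :
    S.FE.rinner (S.FE.bund.zero t') f
      = S.DC.toBanachBundleData.zero (S.Teq.τK t' (S.q f)) := by
  have hρ : S.Teq.ρ (S.q (S.FE.bund.zero t')) = S.Teq.ρ (S.q f) := by
    rw [hS.q_zero]; exact h
  have h0 : S.FE.bund.zero t' = S.FE.bund.smul 0 (S.FE.bund.zero t') :=
    (hS.bund.smul_zero' 0 t').symm
  conv_lhs => rw [h0]
  rw [hS.rinner_smul_left 0 _ f hρ]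
  simp only [map_zero]
  rw [hS.fellC.toIsBanachBundle.zero_smul']
  have hqq : S.DC.proj (S.FE.rinner (S.FE.bund.zero t') f) = S.Teq.τK t' (S.q f) := by
    have := hS.proj_rinner _ f hρ
    rw [hS.q_zero] at this
    exact this
  rw [hqq]

theorem linner_zero_left' {t' : T} {f : EE} (h : S.Teq.σ t' = S.Teq.σ (S.q f)) :
    S.FE.linner (S.FE.bund.zero t') f
      = S.DB.toBanachBundleData.zero (S.Teq.τH t' (S.q f)) := by
  have hσ : S.Teq.σ (S.q (S.FE.bund.zero t')) = S.Teq.σ (S.q f) := by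
    rw [hS.q_zero]; exact h
  have h0 : S.FE.bund.zero t' = S.FE.bund.smul 0 (S.FE.bund.zero t') :=
    (hS.bund.smul_zero' 0 t').symm
  conv_lhs => rw [h0]
  rw [hS.linner_smul_left 0 _ f hσ]
  rw [hS.fellB.toIsBanachBundle.zero_smul']
  have hqq : S.DB.proj (S.FE.linner (S.FE.bund.zero t') f) = S.Teq.τH t' (S.q f) := by
    have := hS.proj_linner _ f hσ
    rw [hS.q_zero] at this
    exact this
  rw [hqq]

theorem rinner_sub_left' {e e' f : EE} (hee' : S.q e = S.q e')
    (h : S.Teq.ρ (S.q e) = S.Teq.ρ (S.q f)) :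
    S.FE.rinner (S.FE.bund.sub e e') f
      = S.DC.toBanachBundleData.sub (S.FE.rinner e f) (S.FE.rinner e' f) := by
  rw [BanachBundleData.sub_def, BanachBundleData.sub_def,
    hS.rinner_add_left e _ f (by rw [hS.q_smul]; exact hee') h,
    hS.rinner_smul_left (-1) e' f (by rw [← hee']; exact h)]
  norm_num

theorem rinner_sub_right' {e f f' : EE} (hff' : S.q f = S.q f')
    (h : S.Teq.ρ (S.q e) = S.Teq.ρ (S.q f)) :
    S.FE.rinner e (S.FE.bund.sub f f')
      = S.DC.toBanachBundleData.sub (S.FE.rinner e f) (S.FE.rinner e f') := by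
  rw [BanachBundleData.sub_def, BanachBundleData.sub_def,
    hS.rinner_add_right e f _ (by rw [hS.q_smul]; exact hff') h,
    hS.rinner_smul_right (-1) e f' (by rw [← hff']; exact h)]

theorem linner_sub_left' {e e' f : EE} (hee' : S.q e = S.q e')
    (h : S.Teq.σ (S.q e) = S.Teq.σ (S.q f)) :
    S.FE.linner (S.FE.bund.sub e e') f
      = S.DB.toBanachBundleData.sub (S.FE.linner e f) (S.FE.linner e' f) := by
  rw [BanachBundleData.sub_def, BanachBundleData.sub_def,
    hS.linner_add_left e _ f (by rw [hS.q_smul]; exact hee') h,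
    hS.linner_smul_left (-1) e' f (by rw [← hee']; exact h)]

theorem linner_sub_right' {e f f' : EE} (hff' : S.q f = S.q f')
    (h : S.Teq.σ (S.q e) = S.Teq.σ (S.q f)) :
    S.FE.linner e (S.FE.bund.sub f f')
      = S.DB.toBanachBundleData.sub (S.FE.linner e f) (S.FE.linner e f') := by
  rw [BanachBundleData.sub_def, BanachBundleData.sub_def,
    hS.linner_add_right e f _ (by rw [hS.q_smul]; exact hff') h,
    hS.linner_smul_right (-1) e f' (by rw [← hff']; exact h)]
  norm_num

end EquivSetup.IsFellEquiv

namespace EquivSetup.IsFellEquiv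

variable {H K T BB CC EE : Type*} [TopologicalSpace H] [TopologicalSpace K]
  [TopologicalSpace T] [TopologicalSpace BB] [TopologicalSpace CC] [TopologicalSpace EE]
  {S : EquivSetup H K T BB CC EE} (hS : S.IsFellEquiv)

include hS

theorem rinner_selfsub {e : EE} {v : CC} (hv : S.DC.proj v = S.Teq.σ (S.q e))
    (hsv : S.DC.star v = v) :
    S.FE.rinner (S.FE.bund.sub e (S.FE.ract e v)) (S.FE.bund.sub e (S.FE.ract e v))
      = S.DC.toBanachBundleData.sub
          (S.DC.toBanachBundleData.sub (S.FE.rinner e e)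
            (S.DC.mul (S.FE.rinner e e) v))
          (S.DC.toBanachBundleData.sub (S.DC.mul v (S.FE.rinner e e))
            (S.DC.mul (S.DC.mul v (S.FE.rinner e e)) v)) := by
  have hT := hS.equivT
  have huK : S.𝒢K.IsUnit (S.Teq.σ (S.q e)) := hT.σ_unit (S.q e)
  have hcomp : S.Teq.σ (S.q e) = S.𝒢K.rng (S.DC.proj v) := by rw [hv, huK.rng_eq]
  have hqev : S.q (S.FE.ract e v) = S.q e := by
    rw [hS.proj_ract e v hcomp, hv, hT.ract_id]
  have hpa : S.DC.proj (S.FE.rinner e e) = S.Teq.σ (S.q e) := by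
    rw [hS.proj_rinner e e rfl, hT.τK_self]
  have hsa : S.DC.star (S.FE.rinner e e) = S.FE.rinner e e := hS.rinner_star e e rfl
  have s1 : S.FE.rinner e (S.FE.ract e v) = S.DC.mul (S.FE.rinner e e) v :=
    hS.rinner_ract e e v rfl hcomp
  have s2 : S.FE.rinner (S.FE.ract e v) e = S.DC.mul v (S.FE.rinner e e) := by
    have j1 := hS.rinner_star e (S.FE.ract e v) (by rw [hqev])
    rw [← j1, s1, hS.fellC.star_mul' _ v (by rw [hpa, hv, huK, huK.rng_eq]), hsv, hsa]
  have s3 : S.FE.rinner (S.FE.ract e v) (S.FE.ract e v)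
      = S.DC.mul (S.DC.mul v (S.FE.rinner e e)) v := by
    rw [hS.rinner_ract (S.FE.ract e v) e v (by rw [hqev]) hcomp, s2]
  have hqsub : S.q (S.FE.bund.sub e (S.FE.ract e v)) = S.q e :=
    hS.bund.proj_sub hqev.symm
  rw [hS.rinner_sub_left' hqev.symm (by rw [hqsub]),
    hS.rinner_sub_right' (e := e) hqev.symm rfl,
    hS.rinner_sub_right' (e := S.FE.ract e v) hqev.symm (by rw [hqev]),
    s1, s2, s3]

theorem linner_selfsub {e : EE} {v : BB} (hv : S.DB.proj v = S.Teq.ρ (S.q e))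
    (hsv : S.DB.star v = v) :
    S.FE.linner (S.FE.bund.sub e (S.FE.lact v e)) (S.FE.bund.sub e (S.FE.lact v e))
      = S.DB.toBanachBundleData.sub
          (S.DB.toBanachBundleData.sub (S.FE.linner e e)
            (S.DB.mul (S.FE.linner e e) v))
          (S.DB.toBanachBundleData.sub (S.DB.mul v (S.FE.linner e e))
            (S.DB.mul (S.DB.mul v (S.FE.linner e e)) v)) := by
  have hT := hS.equivT
  have huH : S.𝒢H.IsUnit (S.Teq.ρ (S.q e)) := hT.ρ_unit (S.q e)
  have hcomp : S.𝒢H.src (S.DB.proj v) = S.Teq.ρ (S.q e) := by rw [hv]; exact huH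
  have hqve : S.q (S.FE.lact v e) = S.q e := by
    rw [hS.proj_lact v e hcomp, hv, hT.lact_id]
  have hpa : S.DB.proj (S.FE.linner e e) = S.Teq.ρ (S.q e) := by
    rw [hS.proj_linner e e rfl, hT.τH_self]
  have hsa : S.DB.star (S.FE.linner e e) = S.FE.linner e e := hS.linner_star e e rfl
  have s1 : S.FE.linner (S.FE.lact v e) e = S.DB.mul v (S.FE.linner e e) :=
    hS.linner_lact v e e hcomp rfl
  have s2 : S.FE.linner e (S.FE.lact v e) = S.DB.mul (S.FE.linner e e) v := by
    have j1 := hS.linner_star (S.FE.lact v e) e (by rw [hqve])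
    rw [← j1, s1, hS.fellB.star_mul' v _ (by rw [hv, hpa, huH, huH.rng_eq]), hsv, hsa]
  have s3 : S.FE.linner (S.FE.lact v e) (S.FE.lact v e)
      = S.DB.mul (S.DB.mul v (S.FE.linner e e)) v := by
    rw [hS.linner_lact v e (S.FE.lact v e) hcomp (by rw [hqve]), s2]
    exact (hS.fellB.mul_assoc' v (S.FE.linner e e) v
      (by rw [hv, hpa, huH, huH.rng_eq]) (by rw [hv, hpa, huH, huH.rng_eq])).symm
  have hqsub : S.q (S.FE.bund.sub e (S.FE.lact v e)) = S.q e :=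
    hS.bund.proj_sub hqve.symm
  rw [hS.linner_sub_left' hqve.symm (by rw [hqsub]),
    hS.linner_sub_right' (e := e) hqve.symm rfl,
    hS.linner_sub_right' (e := S.FE.lact v e) hqve.symm (by rw [hqve]),
    s1, s2, s3]

theorem rinner_ract_left' {e f : EE} {d : CC}
    (hef : S.Teq.ρ (S.q e) = S.Teq.ρ (S.q f))
    (hd : S.Teq.σ (S.q e) = S.𝒢K.rng (S.DC.proj d)) :
    S.FE.rinner (S.FE.ract e d) f = S.DC.mul (S.DC.star d) (S.FE.rinner e f) := by
  have hT := hS.equivT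
  have hq : S.q (S.FE.ract e d) = S.Teq.ract (S.q e) (S.DC.proj d) := hS.proj_ract e d hd
  have hρq : S.Teq.ρ (S.q (S.FE.ract e d)) = S.Teq.ρ (S.q e) := by
    rw [hq, hT.ρ_ract _ _ hd]
  have k1 := hS.rinner_star f (S.FE.ract e d) (by rw [hρq]; exact hef.symm)
  rw [← k1, hS.rinner_ract f e d hef.symm hd,
    hS.fellC.star_mul' _ d (by
      rw [hS.proj_rinner f e hef.symm, hT.τK_src hef.symm]
      exact hd),
    hS.rinner_star f e hef.symm]

end EquivSetup.IsFellEquiv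

/-- **Lemma 3.1** (Muhly–Williams, Lemma 6.2): for `s(h) = ρ(t)` the map
`(b,e) ↦ b·e` induces an isomorphism of `B_{r(h)}`–`C_{σ(t)}` imprimitivity bimodules
`B_h ⊗_{B_{ρ(t)}} E_t ≅ E_{h·t}`, and for `σ(t) = r(k)` the map `(e,c) ↦ e·c` induces
an isomorphism `E_t ⊗_{C_{σ(t)}} C_k ≅ E_{t·k}` of `B_{ρ(t)}`–`C_{s(k)}` imprimitivity
bimodules.

Since the balanced tensor product is characterised (uniquely up to isomorphism) by
generators and inner products, the statement is rendered concretely: the induced map is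
surjective with dense span — `E_{h·t}` is the closed span of the products `b·e` — and it
preserves both inner products, whose values on elementary tensors are
`⟨b⊗e, b'⊗e'⟩_𝒞 = ⟨e, (b* b')·e'⟩_𝒞` and `⟨b⊗e, b'⊗e'⟩_ℬ = b ⟨e,e'⟩_ℬ b'^*` (and the
analogous formulas for `E_t ⊗ C_k`).  These conditions say exactly that `(b,e) ↦ b·e`
induces a well-defined isometric bimodule isomorphism of the tensor product onto
`E_{h·t}`. -/
theorem tensor_iso_of_equivalence
    (H K T BB CC EE : Type*) [TopologicalSpace H] [T2Space H] [LocallyCompactSpace H]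
    [SecondCountableTopology H] [TopologicalSpace K] [T2Space K] [LocallyCompactSpace K]
    [SecondCountableTopology K] [TopologicalSpace T] [T2Space T] [LocallyCompactSpace T]
    [SecondCountableTopology T] [TopologicalSpace BB] [TopologicalSpace CC]
    [TopologicalSpace EE]
    (S : EquivSetup H K T BB CC EE) (hS : S.IsFellEquiv) :
    (∀ (h : H) (t : T), S.𝒢H.src h = S.Teq.ρ t →
      -- surjectivity/density: `E_{h·t}` is the closed span of `B_h · E_t`
      ({e : EE | S.q e = S.Teq.lact h t}
        = fibSpanApprox S.FE.bund (S.Teq.lact h t)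
            (fun w => ∃ b e, S.DB.proj b = h ∧ S.q e = t ∧ w = S.FE.lact b e)) ∧
      -- preservation of the inner products on elementary tensors
      (∀ b b' e e', S.DB.proj b = h → S.DB.proj b' = h → S.q e = t → S.q e' = t →
        S.FE.rinner (S.FE.lact b e) (S.FE.lact b' e')
          = S.FE.rinner e (S.FE.lact (S.DB.mul (S.DB.star b) b') e') ∧
        S.FE.linner (S.FE.lact b e) (S.FE.lact b' e')
          = S.DB.mul (S.DB.mul b (S.FE.linner e e')) (S.DB.star b'))) ∧
    (∀ (t : T) (k : K), S.Teq.σ t = S.𝒢K.rng k →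
      ({e : EE | S.q e = S.Teq.ract t k}
        = fibSpanApprox S.FE.bund (S.Teq.ract t k)
            (fun w => ∃ e c, S.q e = t ∧ S.DC.proj c = k ∧ w = S.FE.ract e c)) ∧
      (∀ e e' c c', S.q e = t → S.q e' = t → S.DC.proj c = k → S.DC.proj c' = k →
        S.FE.rinner (S.FE.ract e c) (S.FE.ract e' c')
          = S.DC.mul (S.DC.star c) (S.DC.mul (S.FE.rinner e e') c') ∧
        S.FE.linner (S.FE.ract e c) (S.FE.ract e' c')
          = S.FE.linner (S.FE.ract e (S.DC.mul c (S.DC.star c'))) e')) := by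
  have hT := hS.equivT
  have hB := hS.bund
  have hBB := hS.fellB.toIsBanachBundle
  have hCC := hS.fellC.toIsBanachBundle
  constructor
  · intro h t hht
    have hσ2 : S.Teq.σ (S.Teq.lact h t) = S.Teq.σ t := hT.σ_lact h t hht
    have hρ2 : S.Teq.ρ (S.Teq.lact h t) = S.𝒢H.rng h := hT.ρ_lact h t hht
    have huK : S.𝒢K.IsUnit (S.Teq.σ t) := hT.σ_unit t
    constructor
    · -- density of B_h · E_t in E_{h·t}
      ext e
      simp only [Set.mem_setOf_eq, fibSpanApprox]
      constructor
      · intro he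
        refine ⟨he, ?_⟩
        intro ε hε
        have hσe : S.Teq.σ (S.q e) = S.Teq.σ t := by rw [he, hσ2]
        obtain ⟨c₀, hc₀p, hc₀e⟩ := hS.rinner_self_pos e
        have hc₀u : S.DC.proj c₀ = S.Teq.σ t := by rw [hc₀p, hσe]
        have hε2 : (0:ℝ) < (ε/2)^2 := by positivity
        obtain ⟨v, hvp, hvs, hvn⟩ := hS.fellC.exists_approx_unit huK hc₀u hε2
        rw [← hc₀e] at hvn
        have hv' : S.DC.proj v = S.Teq.σ (S.q e) := by rw [hvp, hσe]
        have hcompev : S.Teq.σ (S.q e) = S.𝒢K.rng (S.DC.proj v) := by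
          rw [hv', (hT.σ_unit _).rng_eq]
        have hqev : S.q (S.FE.ract e v) = S.q e := by
          rw [hS.proj_ract e v hcompev, hv', hT.ract_id]
        have hnorm2 : S.FE.bund.norm (S.FE.bund.sub e (S.FE.ract e v)) ^ 2 < (ε/2)^2 := by
          rw [← hS.norm_rinner_self, hS.rinner_selfsub hv' hvs]
          exact hvn
        have hnorm1 : S.FE.bund.norm (S.FE.bund.sub e (S.FE.ract e v)) < ε/2 := by
          nlinarith [hB.norm_nonneg (S.FE.bund.sub e (S.FE.ract e v)), hε]
        have hfull := hS.rinner_full t v hvp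
        have hε₂pos : 0 < (ε/2) / (S.FE.bund.norm e + 1) := by
          have := hB.norm_nonneg e
          positivity
        obtain ⟨l, hl, hln⟩ := hfull.2 _ hε₂pos
        have hlp : ∀ z ∈ l, S.DC.proj z = S.Teq.σ t := by
          intro z hz
          obtain ⟨e₁, f₁, he₁, hf₁, rfl⟩ := hl z hz
          rw [hS.proj_rinner e₁ f₁ (by rw [he₁, hf₁]), he₁, hf₁, hT.τK_self]
        refine ⟨l.map (S.FE.ract e), ?_, ?_⟩
        · intro z hz
          obtain ⟨w, hw, rfl⟩ := List.mem_map.mp hz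
          obtain ⟨e₁, f₁, he₁, hf₁, rfl⟩ := hl w hw
          refine ⟨S.FE.linner e e₁, f₁, ?_, hf₁, ?_⟩
          · rw [hS.proj_linner e e₁ (by rw [he, hσ2, he₁]), he, he₁, hT.τH_lact hht]
          · exact (hS.imprim e e₁ f₁ (by rw [he, hσ2, he₁]) (by rw [he₁, hf₁])).symm
        · -- the norm estimate
          have hs : S.DC.proj (S.DC.toBanachBundleData.fibSum (S.Teq.σ t) l)
              = S.Teq.σ t := hCC.proj_fibSum hlp
          have hrs : S.FE.ract e (S.DC.toBanachBundleData.fibSum (S.Teq.σ t) l)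
              = S.FE.bund.fibSum (S.Teq.lact h t) (l.map (S.FE.ract e)) := by
            rw [hS.ract_fibSum' hlp (by rw [hσe, huK.rng_eq]), he]
            congr 1
            rw [← hσ2, hT.ract_id]
          have hsubsub : S.FE.bund.sub (S.FE.ract e v)
                (S.FE.bund.fibSum (S.Teq.lact h t) (l.map (S.FE.ract e)))
              = S.FE.ract e (S.DC.toBanachBundleData.sub v
                  (S.DC.toBanachBundleData.fibSum (S.Teq.σ t) l)) := by
            rw [hS.ract_sub' (by rw [hvp, hs]) hcompev, hrs]
          have hq_map : ∀ z ∈ l.map (S.FE.ract e), S.FE.bund.proj z = S.Teq.lact h t := by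
            intro z hz
            obtain ⟨w, hw, rfl⟩ := List.mem_map.mp hz
            show S.q _ = _
            rw [hS.proj_ract e w (by rw [hσe, hlp w hw, huK.rng_eq]), hlp w hw, he,
              ← hσ2, hT.ract_id]
          have hqfs : S.FE.bund.proj
              (S.FE.bund.fibSum (S.Teq.lact h t) (l.map (S.FE.ract e)))
              = S.Teq.lact h t := hB.proj_fibSum hq_map
          have hsecond : S.FE.bund.norm (S.FE.bund.sub (S.FE.ract e v)
                (S.FE.bund.fibSum (S.Teq.lact h t) (l.map (S.FE.ract e))))
              < ε/2 := by
            rw [hsubsub]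
            have hcondsub : S.Teq.σ (S.q e) = S.𝒢K.rng (S.DC.proj
                (S.DC.toBanachBundleData.sub v
                  (S.DC.toBanachBundleData.fibSum (S.Teq.σ t) l))) := by
              rw [hCC.proj_sub (by rw [hvp, hs]), hvp, huK.rng_eq]
              exact hσe
            calc S.FE.bund.norm (S.FE.ract e (S.DC.toBanachBundleData.sub v
                  (S.DC.toBanachBundleData.fibSum (S.Teq.σ t) l)))
                ≤ S.FE.bund.norm e * S.DC.toBanachBundleData.norm
                    (S.DC.toBanachBundleData.sub v
                      (S.DC.toBanachBundleData.fibSum (S.Teq.σ t) l)) :=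
                  hS.norm_ract_le e _ hcondsub
              _ < ε/2 := by
                  have h1 : S.DC.toBanachBundleData.norm (S.DC.toBanachBundleData.sub v
                      (S.DC.toBanachBundleData.fibSum (S.Teq.σ t) l))
                      < (ε/2) / (S.FE.bund.norm e + 1) := hln
                  have h2 : 0 ≤ S.FE.bund.norm e := hB.norm_nonneg e
                  have h3 : 0 ≤ S.DC.toBanachBundleData.norm
                      (S.DC.toBanachBundleData.sub v
                        (S.DC.toBanachBundleData.fibSum (S.Teq.σ t) l)) :=
                    hCC.norm_nonneg _
                  have h4 : (ε/2) / (S.FE.bund.norm e + 1) * (S.FE.bund.norm e + 1)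
                      = ε/2 := div_mul_cancel₀ _ (by positivity)
                  nlinarith [mul_le_mul_of_nonneg_left h1.le h2]
          calc S.FE.bund.norm (S.FE.bund.sub e
                (S.FE.bund.fibSum (S.Teq.lact h t) (l.map (S.FE.ract e))))
              ≤ S.FE.bund.norm (S.FE.bund.sub e (S.FE.ract e v))
                + S.FE.bund.norm (S.FE.bund.sub (S.FE.ract e v)
                    (S.FE.bund.fibSum (S.Teq.lact h t) (l.map (S.FE.ract e)))) :=
                hB.norm_sub_triangle hqev.symm (hqev.trans (he.trans hqfs.symm))
            _ < ε/2 + ε/2 := add_lt_add hnorm1 hsecond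
            _ = ε := by ring
      · intro hmem
        exact hmem.1
    · -- the inner product identities for B_h ⊗ E_t
      intro b b' e e' hb hb' heq heq'
      have hqbe : S.q (S.FE.lact b e) = S.Teq.lact h t := by
        rw [hS.proj_lact b e (by rw [hb, heq]; exact hht), hb, heq]
      have hqb'e' : S.q (S.FE.lact b' e') = S.Teq.lact h t := by
        rw [hS.proj_lact b' e' (by rw [hb', heq']; exact hht), hb', heq']
      have hpsb : S.DB.proj (S.DB.star b) = S.𝒢H.inv h := by rw [hS.fellB.proj_star, hb]
      have hmbb' : S.DB.proj (S.DB.mul (S.DB.star b) b') = S.Teq.ρ t := by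
        rw [hS.fellB.proj_mul _ _ (by rw [hpsb, hb', S.𝒢H.src_inv]), hpsb, hb',
          S.𝒢H.inv_mul, hht]
      have hqme' : S.q (S.FE.lact (S.DB.mul (S.DB.star b) b') e') = t := by
        rw [hS.proj_lact _ e' (by rw [hmbb', heq']; exact hT.ρ_unit t), hmbb', heq',
          hT.lact_id]
      have hpc₁ : S.DC.proj (S.FE.rinner (S.FE.lact b e) (S.FE.lact b' e')) = S.Teq.σ t := by
        rw [hS.proj_rinner _ _ (by rw [hqbe, hqb'e']), hqbe, hqb'e', hT.τK_self, hσ2]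
      have hpc₂ : S.DC.proj (S.FE.rinner e (S.FE.lact (S.DB.mul (S.DB.star b) b') e'))
          = S.Teq.σ t := by
        rw [hS.proj_rinner _ _ (by rw [heq, hqme']), heq, hqme', hT.τK_self]
      constructor
      · -- C-valued inner products agree
        have key : ∀ x, S.q x = t →
            S.FE.ract x (S.FE.rinner (S.FE.lact b e) (S.FE.lact b' e'))
              = S.FE.ract x (S.FE.rinner e
                  (S.FE.lact (S.DB.mul (S.DB.star b) b') e')) := by
          intro x hx
          have i1 := hS.imprim x (S.FE.lact b e) (S.FE.lact b' e')
            (by rw [hx, hqbe]; exact hσ2.symm) (by rw [hqbe, hqb'e'])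
          have i2 : S.FE.linner x (S.FE.lact b e)
              = S.DB.mul (S.FE.linner x e) (S.DB.star b) := by
            have j1 := hS.linner_star (S.FE.lact b e) x (by rw [hqbe, hx]; exact hσ2)
            rw [← j1, hS.linner_lact b e x (by rw [hb, heq]; exact hht) (by rw [heq, hx]),
              hS.fellB.star_mul' b _ (by
                rw [hb, hS.proj_linner e x (by rw [heq, hx]), heq, hx, hT.τH_self,
                  (hT.ρ_unit t).rng_eq]
                exact hht),
              hS.linner_star e x (by rw [heq, hx])]
          have i3 : S.FE.lact (S.DB.mul (S.FE.linner x e) (S.DB.star b))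
                (S.FE.lact b' e')
              = S.FE.lact (S.FE.linner x e) (S.FE.lact (S.DB.star b)
                  (S.FE.lact b' e')) := by
            apply hS.lact_lact
            · rw [hS.proj_linner x e (by rw [hx, heq]), hx, heq, hT.τH_self, hpsb,
                S.𝒢H.rng_inv, hht]
              exact hT.ρ_unit t
            · rw [hpsb, S.𝒢H.src_inv, hqb'e', hρ2]
          have i4 : S.FE.lact (S.DB.star b) (S.FE.lact b' e')
              = S.FE.lact (S.DB.mul (S.DB.star b) b') e' :=
            (hS.lact_lact (S.DB.star b) b' e' (by rw [hpsb, S.𝒢H.src_inv, hb'])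
              (by rw [hb', heq']; exact hht)).symm
          have i5 := hS.imprim x e (S.FE.lact (S.DB.mul (S.DB.star b) b') e')
            (by rw [hx, heq]) (by rw [heq, hqme'])
          rw [← i1, i2, i3, i4, i5]
        have hann : ∀ x, S.q x = t →
            S.FE.ract x (S.DC.toBanachBundleData.sub
              (S.FE.rinner (S.FE.lact b e) (S.FE.lact b' e'))
              (S.FE.rinner e (S.FE.lact (S.DB.mul (S.DB.star b) b') e')))
            = S.FE.bund.zero t := by
          intro x hx
          rw [hS.ract_sub' (by rw [hpc₁, hpc₂]) (by rw [hx, hpc₁, huK.rng_eq]),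
            key x hx, hB.sub_self']
          congr 1
          show S.q _ = t
          rw [hS.proj_ract x _ (by rw [hx, hpc₂, huK.rng_eq]), hpc₂, hx]
          exact hT.ract_id t
        have hpc : S.DC.proj (S.DC.toBanachBundleData.sub
            (S.FE.rinner (S.FE.lact b e) (S.FE.lact b' e'))
            (S.FE.rinner e (S.FE.lact (S.DB.mul (S.DB.star b) b') e'))) = S.Teq.σ t := by
          rw [hCC.proj_sub (by rw [hpc₁, hpc₂]), hpc₁]
        have hz : S.DC.toBanachBundleData.sub
            (S.FE.rinner (S.FE.lact b e) (S.FE.lact b' e'))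
            (S.FE.rinner e (S.FE.lact (S.DB.mul (S.DB.star b) b') e'))
            = S.DC.toBanachBundleData.zero (S.Teq.σ t) := by
          apply hS.fellC.eq_zero_of_approx huK hpc
          intro δ hδ
          obtain ⟨l, hl, hln⟩ := (hS.rinner_full t _ hpc).2 δ hδ
          refine ⟨l, ?_, hln⟩
          intro z hz
          obtain ⟨e₁, f₁, he₁, hf₁, rfl⟩ := hl z hz
          constructor
          · rw [hS.proj_rinner e₁ f₁ (by rw [he₁, hf₁]), he₁, hf₁, hT.τK_self]
          · have j1 := hS.rinner_ract_left' (e := e₁) (f := f₁)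
              (d := S.DC.toBanachBundleData.sub
                (S.FE.rinner (S.FE.lact b e) (S.FE.lact b' e'))
                (S.FE.rinner e (S.FE.lact (S.DB.mul (S.DB.star b) b') e')))
              (by rw [he₁, hf₁]) (by rw [he₁, hpc, huK.rng_eq])
            rw [← j1, hann e₁ he₁, hS.rinner_zero_left' (by rw [hf₁]), hf₁, hT.τK_self]
        exact hCC.eq_of_sub_eq_zero' (by rw [hpc₁, hpc₂]) (by rw [hpc₂]; exact hz)
      · -- B-valued inner products agree
        rw [hS.linner_lact b e _ (by rw [hb, heq]; exact hht)
          (by rw [heq, hqb'e']; exact hσ2.symm)]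
        have i2 : S.FE.linner e (S.FE.lact b' e')
            = S.DB.mul (S.FE.linner e e') (S.DB.star b') := by
          have j1 := hS.linner_star (S.FE.lact b' e') e (by rw [hqb'e', heq]; exact hσ2)
          rw [← j1, hS.linner_lact b' e' e (by rw [hb', heq']; exact hht)
              (by rw [heq', heq]),
            hS.fellB.star_mul' b' _ (by
              rw [hb', hS.proj_linner e' e (by rw [heq', heq]), heq', heq, hT.τH_self,
                (hT.ρ_unit t).rng_eq]
              exact hht),
            hS.linner_star e' e (by rw [heq', heq])]
        rw [i2]
        refine (hS.fellB.mul_assoc' b (S.FE.linner e e') (S.DB.star b') ?_ ?_).symm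
        · rw [hb, hS.proj_linner e e' (by rw [heq, heq']), heq, heq', hT.τH_self,
            (hT.ρ_unit t).rng_eq]
          exact hht
        · rw [hS.proj_linner e e' (by rw [heq, heq']), heq, heq', hT.τH_self,
            hS.fellB.proj_star, hb', S.𝒢H.rng_inv, hht]
          exact hT.ρ_unit t
  · intro t k htk
    have hρ3 : S.Teq.ρ (S.Teq.ract t k) = S.Teq.ρ t := hT.ρ_ract t k htk
    have huH : S.𝒢H.IsUnit (S.Teq.ρ t) := hT.ρ_unit t
    constructor
    · -- density of E_t · C_k in E_{t·k}
      ext e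
      simp only [Set.mem_setOf_eq, fibSpanApprox]
      constructor
      · intro he
        refine ⟨he, ?_⟩
        intro ε hε
        have hρe : S.Teq.ρ (S.q e) = S.Teq.ρ t := by rw [he, hρ3]
        obtain ⟨b₀, hb₀p, hb₀e⟩ := hS.linner_self_pos e
        have hb₀u : S.DB.proj b₀ = S.Teq.ρ t := by rw [hb₀p, hρe]
        have hε2 : (0:ℝ) < (ε/2)^2 := by positivity
        obtain ⟨v, hvp, hvs, hvn⟩ := hS.fellB.exists_approx_unit huH hb₀u hε2
        rw [← hb₀e] at hvn
        have hv' : S.DB.proj v = S.Teq.ρ (S.q e) := by rw [hvp, hρe]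
        have hcompve : S.𝒢H.src (S.DB.proj v) = S.Teq.ρ (S.q e) := by
          rw [hv']; exact hT.ρ_unit _
        have hqve : S.q (S.FE.lact v e) = S.q e := by
          rw [hS.proj_lact v e hcompve, hv', hT.lact_id]
        have hnorm2 : S.FE.bund.norm (S.FE.bund.sub e (S.FE.lact v e)) ^ 2 < (ε/2)^2 := by
          rw [← hS.norm_linner_self, hS.linner_selfsub hv' hvs]
          exact hvn
        have hnorm1 : S.FE.bund.norm (S.FE.bund.sub e (S.FE.lact v e)) < ε/2 := by
          nlinarith [hB.norm_nonneg (S.FE.bund.sub e (S.FE.lact v e)), hε]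
        have hfull := hS.linner_full t v hvp
        have hε₂pos : 0 < (ε/2) / (S.FE.bund.norm e + 1) := by
          have := hB.norm_nonneg e
          positivity
        obtain ⟨l, hl, hln⟩ := hfull.2 _ hε₂pos
        have hlp : ∀ z ∈ l, S.DB.proj z = S.Teq.ρ t := by
          intro z hz
          obtain ⟨m, f₁, hm, hf₁, rfl⟩ := hl z hz
          rw [hS.proj_linner m f₁ (by rw [hm, hf₁]), hm, hf₁, hT.τH_self]
        refine ⟨l.map (fun w => S.FE.lact w e), ?_, ?_⟩
        · intro z hz
          obtain ⟨w, hw, rfl⟩ := List.mem_map.mp hz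
          obtain ⟨m, f₁, hm, hf₁, rfl⟩ := hl w hw
          refine ⟨m, S.FE.rinner f₁ e, hm, ?_, ?_⟩
          · rw [hS.proj_rinner f₁ e (by rw [hf₁, hρe]), hf₁, he, hT.τK_ract htk]
          · exact hS.imprim m f₁ e (by rw [hm, hf₁]) (by rw [hf₁, hρe])
        · have hs : S.DB.proj (S.DB.toBanachBundleData.fibSum (S.Teq.ρ t) l)
              = S.Teq.ρ t := hBB.proj_fibSum hlp
          have hrs : S.FE.lact (S.DB.toBanachBundleData.fibSum (S.Teq.ρ t) l) e
              = S.FE.bund.fibSum (S.Teq.ract t k) (l.map (fun w => S.FE.lact w e)) := by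
            rw [hS.fibSum_lact' hlp (by rw [hρe]; exact huH), he]
            congr 1
            rw [← hρ3, hT.lact_id]
          have hsubsub : S.FE.bund.sub (S.FE.lact v e)
                (S.FE.bund.fibSum (S.Teq.ract t k) (l.map (fun w => S.FE.lact w e)))
              = S.FE.lact (S.DB.toBanachBundleData.sub v
                  (S.DB.toBanachBundleData.fibSum (S.Teq.ρ t) l)) e := by
            rw [hS.sub_lact' (by rw [hvp, hs]) hcompve, hrs]
          have hq_map : ∀ z ∈ l.map (fun w => S.FE.lact w e),
              S.FE.bund.proj z = S.Teq.ract t k := by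
            intro z hz
            obtain ⟨w, hw, rfl⟩ := List.mem_map.mp hz
            show S.q _ = _
            rw [hS.proj_lact w e (by rw [hlp w hw, hρe]; exact huH), hlp w hw, he,
              ← hρ3, hT.lact_id]
          have hqfs : S.FE.bund.proj
              (S.FE.bund.fibSum (S.Teq.ract t k) (l.map (fun w => S.FE.lact w e)))
              = S.Teq.ract t k := hB.proj_fibSum hq_map
          have hsecond : S.FE.bund.norm (S.FE.bund.sub (S.FE.lact v e)
                (S.FE.bund.fibSum (S.Teq.ract t k) (l.map (fun w => S.FE.lact w e))))
              < ε/2 := by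
            rw [hsubsub]
            have hcondsub : S.𝒢H.src (S.DB.proj (S.DB.toBanachBundleData.sub v
                (S.DB.toBanachBundleData.fibSum (S.Teq.ρ t) l))) = S.Teq.ρ (S.q e) := by
              rw [hBB.proj_sub (by rw [hvp, hs]), hvp, hρe]
              exact huH
            calc S.FE.bund.norm (S.FE.lact (S.DB.toBanachBundleData.sub v
                  (S.DB.toBanachBundleData.fibSum (S.Teq.ρ t) l)) e)
                ≤ S.DB.toBanachBundleData.norm (S.DB.toBanachBundleData.sub v
                    (S.DB.toBanachBundleData.fibSum (S.Teq.ρ t) l)) * S.FE.bund.norm e :=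
                  hS.norm_lact_le _ e hcondsub
              _ < ε/2 := by
                  have h1 : S.DB.toBanachBundleData.norm (S.DB.toBanachBundleData.sub v
                      (S.DB.toBanachBundleData.fibSum (S.Teq.ρ t) l))
                      < (ε/2) / (S.FE.bund.norm e + 1) := hln
                  have h2 : 0 ≤ S.FE.bund.norm e := hB.norm_nonneg e
                  have h3 : 0 ≤ S.DB.toBanachBundleData.norm
                      (S.DB.toBanachBundleData.sub v
                        (S.DB.toBanachBundleData.fibSum (S.Teq.ρ t) l)) :=
                    hBB.norm_nonneg _
                  have h4 : (ε/2) / (S.FE.bund.norm e + 1) * (S.FE.bund.norm e + 1)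
                      = ε/2 := div_mul_cancel₀ _ (by positivity)
                  nlinarith [mul_le_mul_of_nonneg_right h1.le h2]
          calc S.FE.bund.norm (S.FE.bund.sub e
                (S.FE.bund.fibSum (S.Teq.ract t k) (l.map (fun w => S.FE.lact w e))))
              ≤ S.FE.bund.norm (S.FE.bund.sub e (S.FE.lact v e))
                + S.FE.bund.norm (S.FE.bund.sub (S.FE.lact v e)
                    (S.FE.bund.fibSum (S.Teq.ract t k)
                      (l.map (fun w => S.FE.lact w e)))) :=
                hB.norm_sub_triangle hqve.symm (hqve.trans (he.trans hqfs.symm))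
            _ < ε/2 + ε/2 := add_lt_add hnorm1 hsecond
            _ = ε := by ring
      · intro hmem
        exact hmem.1
    · -- the inner product identities for E_t ⊗ C_k
      intro e e' c c' heq heq' hc hc'
      have hqec : S.q (S.FE.ract e c) = S.Teq.ract t k := by
        rw [hS.proj_ract e c (by rw [heq, hc]; exact htk), hc, heq]
      have hqe'c' : S.q (S.FE.ract e' c') = S.Teq.ract t k := by
        rw [hS.proj_ract e' c' (by rw [heq', hc']; exact htk), hc', heq']
      constructor
      · -- C-valued inner products
        rw [hS.rinner_ract (S.FE.ract e c) e' c' (by rw [hqec, heq', hρ3])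
          (by rw [heq', hc']; exact htk)]
        rw [hS.rinner_ract_left' (e := e) (f := e') (d := c) (by rw [heq, heq'])
          (by rw [heq, hc]; exact htk)]
        refine hS.fellC.mul_assoc' (S.DC.star c) (S.FE.rinner e e') c' ?_ ?_
        · rw [hS.fellC.proj_star, hc, S.𝒢K.src_inv,
            hS.proj_rinner e e' (by rw [heq, heq']), heq, heq', hT.τK_self,
            (hT.σ_unit t).rng_eq]
          exact htk.symm
        · rw [hS.proj_rinner e e' (by rw [heq, heq']), heq, heq', hT.τK_self, hc',
            hT.σ_unit t]
          exact htk
      · -- B-valued inner products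
        have hpsc' : S.DC.proj (S.DC.star c') = S.𝒢K.inv k := by
          rw [hS.fellC.proj_star, hc']
        have hX : S.DC.proj (S.DC.mul c (S.DC.star c')) = S.Teq.σ t := by
          rw [hS.fellC.proj_mul _ _ (by rw [hc, hpsc', S.𝒢K.rng_inv]), hc, hpsc',
            S.𝒢K.mul_inv, ← htk]
        have hqeX : S.q (S.FE.ract e (S.DC.mul c (S.DC.star c'))) = t := by
          rw [hS.proj_ract e _ (by rw [heq, hX, (hT.σ_unit t).rng_eq]), hX, heq]
          exact hT.ract_id t
        have hpb₁ : S.DB.proj (S.FE.linner (S.FE.ract e c) (S.FE.ract e' c'))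
            = S.Teq.ρ t := by
          rw [hS.proj_linner _ _ (by rw [hqec, hqe'c']), hqec, hqe'c', hT.τH_self, hρ3]
        have hpb₂ : S.DB.proj (S.FE.linner
            (S.FE.ract e (S.DC.mul c (S.DC.star c'))) e') = S.Teq.ρ t := by
          rw [hS.proj_linner _ _ (by rw [hqeX, heq']), hqeX, heq', hT.τH_self]
        have key2 : ∀ g, S.q g = t →
            S.FE.lact (S.DB.star (S.FE.linner (S.FE.ract e c) (S.FE.ract e' c'))) g
              = S.FE.lact (S.DB.star (S.FE.linner
                  (S.FE.ract e (S.DC.mul c (S.DC.star c'))) e')) g := by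
          intro g hg
          have hprg' : S.DC.proj (S.FE.rinner e g) = S.Teq.σ t := by
            rw [hS.proj_rinner e g (by rw [heq, hg]), heq, hg, hT.τK_self]
          have hsb₁ := hS.linner_star (S.FE.ract e c) (S.FE.ract e' c')
            (by rw [hqec, hqe'c'])
          have hsb₂ := hS.linner_star (S.FE.ract e (S.DC.mul c (S.DC.star c'))) e'
            (by rw [hqeX, heq'])
          rw [hsb₁, hsb₂]
          have i1 := hS.imprim (S.FE.ract e' c') (S.FE.ract e c) g
            (by rw [hqe'c', hqec]) (by rw [hqec, hg, hρ3])
          have i2 := hS.rinner_ract_left' (e := e) (f := g) (d := c)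
            (by rw [heq, hg]) (by rw [heq, hc]; exact htk)
          have hcond_sc : S.𝒢K.src (S.DC.proj (S.DC.star c))
              = S.𝒢K.rng (S.DC.proj (S.FE.rinner e g)) := by
            rw [hS.fellC.proj_star, hc, S.𝒢K.src_inv, hprg', (hT.σ_unit t).rng_eq]
            exact htk.symm
          have i3 : S.FE.ract (S.FE.ract e' c')
                (S.DC.mul (S.DC.star c) (S.FE.rinner e g))
              = S.FE.ract e' (S.DC.mul c'
                  (S.DC.mul (S.DC.star c) (S.FE.rinner e g))) := by
            refine (hS.ract_ract e' c' _ (by rw [heq', hc']; exact htk) ?_).symm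
            rw [hS.fellC.proj_mul _ _ hcond_sc, S.𝒢K.rng_mul _ _ hcond_sc,
              hS.fellC.proj_star, hc, S.𝒢K.rng_inv, hc']
          have i4 : S.DC.mul c' (S.DC.mul (S.DC.star c) (S.FE.rinner e g))
              = S.DC.mul (S.DC.mul c' (S.DC.star c)) (S.FE.rinner e g) :=
            (hS.fellC.mul_assoc' c' (S.DC.star c) (S.FE.rinner e g)
              (by rw [hc', hS.fellC.proj_star, hc, S.𝒢K.rng_inv]) hcond_sc).symm
          have i5 := hS.imprim e' (S.FE.ract e (S.DC.mul c (S.DC.star c'))) g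
            (by rw [heq', hqeX]) (by rw [hqeX, hg])
          have i6 := hS.rinner_ract_left' (e := e) (f := g)
            (d := S.DC.mul c (S.DC.star c'))
            (by rw [heq, hg]) (by rw [heq, hX, (hT.σ_unit t).rng_eq])
          have i7 : S.DC.star (S.DC.mul c (S.DC.star c'))
              = S.DC.mul c' (S.DC.star c) := by
            rw [hS.fellC.star_mul' c (S.DC.star c') (by rw [hc, hpsc', S.𝒢K.rng_inv]),
              hS.fellC.star_star]
          rw [i1, i2, i3, i4, i5, i6, i7]
        have hpsb₁ : S.DB.proj (S.DB.star
            (S.FE.linner (S.FE.ract e c) (S.FE.ract e' c'))) = S.Teq.ρ t := by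
          rw [hS.fellB.proj_star, hpb₁, huH.inv_eq]
        have hpsb₂ : S.DB.proj (S.DB.star (S.FE.linner
            (S.FE.ract e (S.DC.mul c (S.DC.star c'))) e')) = S.Teq.ρ t := by
          rw [hS.fellB.proj_star, hpb₂, huH.inv_eq]
        have hannb : ∀ g, S.q g = t →
            S.FE.lact (S.DB.star (S.DB.toBanachBundleData.sub
              (S.FE.linner (S.FE.ract e c) (S.FE.ract e' c'))
              (S.FE.linner (S.FE.ract e (S.DC.mul c (S.DC.star c'))) e'))) g
            = S.FE.bund.zero t := by
          intro g hg
          rw [hS.fellB.star_sub' (by rw [hpb₁, hpb₂]),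
            hS.sub_lact' (by rw [hpsb₁, hpsb₂]) (by rw [hpsb₁, hg]; exact huH),
            key2 g hg, hB.sub_self']
          congr 1
          show S.q _ = t
          rw [hS.proj_lact _ g (by rw [hpsb₂, hg]; exact huH), hpsb₂, hg, hT.lact_id]
        have hpsub : S.DB.proj (S.DB.toBanachBundleData.sub
            (S.FE.linner (S.FE.ract e c) (S.FE.ract e' c'))
            (S.FE.linner (S.FE.ract e (S.DC.mul c (S.DC.star c'))) e'))
            = S.Teq.ρ t := by
          rw [hBB.proj_sub (by rw [hpb₁, hpb₂]), hpb₁]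
        have hzb : S.DB.toBanachBundleData.sub
            (S.FE.linner (S.FE.ract e c) (S.FE.ract e' c'))
            (S.FE.linner (S.FE.ract e (S.DC.mul c (S.DC.star c'))) e')
            = S.DB.toBanachBundleData.zero (S.Teq.ρ t) := by
          apply hS.fellB.eq_zero_of_approx huH hpsub
          intro δ hδ
          obtain ⟨l, hl, hln⟩ := (hS.linner_full t _ hpsub).2 δ hδ
          refine ⟨l, ?_, hln⟩
          intro z hz
          obtain ⟨m, f₁, hm, hf₁, rfl⟩ := hl z hz
          constructor
          · rw [hS.proj_linner m f₁ (by rw [hm, hf₁]), hm, hf₁, hT.τH_self]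
          · have j1 := (hS.linner_lact (S.DB.star (S.DB.toBanachBundleData.sub
                (S.FE.linner (S.FE.ract e c) (S.FE.ract e' c'))
                (S.FE.linner (S.FE.ract e (S.DC.mul c (S.DC.star c'))) e'))) m f₁
              (by rw [hS.fellB.proj_star, hpsub, huH.inv_eq, hm]; exact huH)
              (by rw [hm, hf₁])).symm
            rw [j1, hannb m hm, hS.linner_zero_left' (by rw [hf₁]), hf₁, hT.τH_self]
        exact hBB.eq_of_sub_eq_zero' (by rw [hpb₁, hpb₂]) (by rw [hpb₂]; exact hzb)


end FellRieffel
end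
end
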